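/- arXiv:2102.00519 — 10 statements merged into one kernel-verified Lean document; each statement's English description precedes it below -/
import Mathlib

section
/- Let q ≥ 2 and n, d be positive integers, and let L be a positive integer with L^d ≥ d·log_q(n) + log_q(q/(q-1)) and L ≤ n. Then the number of arrays in Σ_q^{[n]^d} that avoid all zero L-cubes is at least q^(n^d - 1); equivalently, the redundancy n^d - log_q |C_{d,q}(n,L)| is at most 1. -/
/-!
Union bound. An array containing a zero `L`-cube has one at some position `v ∈ [n]^d`, and
fixing the `L^d` entries of that cube to zero leaves at most `q^(n^d - L^d)` arrays. So at most
`n^d q^(n^d - L^d)` arrays are bad, and the hypothesis on `L` says exactly that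
`n^d q^(-L^d) ≤ 1 - 1/q`: at most a `(1 - 1/q)`-fraction of all `q^(n^d)` arrays is bad.
-/

/-- `W` contains an all-zero `L × ⋯ × L` subcube at position `v ∈ ℕ^d`. -/
def zeroCubeAt (n d L q : ℕ) (W : (Fin d → Fin n) → Fin q) (v : Fin d → ℕ) : Prop :=
  (∀ i, v i + L ≤ n) ∧
  ∀ x : Fin d → Fin n, (∀ i, v i ≤ (x i : ℕ) ∧ (x i : ℕ) < v i + L) → (W x : ℕ) = 0

open Finset

theorem card_filter_forall_mem_mem {α β : Type*} [Fintype α] [DecidableEq α] [Fintype β]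
    [DecidableEq β] (S : Finset α) (T : Finset β) :
    #{f : α → β | ∀ x ∈ S, f x ∈ T} = #T ^ #S * Fintype.card β ^ #Sᶜ := by
  have hpi : ({f : α → β | ∀ x ∈ S, f x ∈ T} : Finset (α → β)) =
      Fintype.piFinset fun x => if x ∈ S then T else univ := by
    ext f
    simp only [mem_filter, mem_univ, true_and, Fintype.mem_piFinset]
    exact forall_congr' fun x => by split_ifs <;> simp [*]
  rw [hpi, Fintype.card_piFinset, compl_eq_univ_sdiff]
  simp only [apply_ite, prod_ite, card_univ, prod_const, filter_mem_eq_inter, univ_inter,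
    filter_not]

theorem Fin.card_filter_le_lt_add {n : ℕ} (a L : ℕ) (h : a + L ≤ n) :
    #{y : Fin n | a ≤ (y : ℕ) ∧ (y : ℕ) < a + L} = L := by
  have hmap : ({y : Fin n | a ≤ (y : ℕ) ∧ (y : ℕ) < a + L} : Finset _).map valEmbedding
      = Ico a (a + L) := by
    ext k
    simp only [mem_map, mem_filter, mem_univ, true_and, valEmbedding_apply, mem_Ico]
    exact ⟨fun ⟨y, hy, hk⟩ => hk ▸ hy, fun hk => ⟨⟨k, by omega⟩, hk, rfl⟩⟩
  rw [← card_map, hmap, Nat.card_Ico, Nat.add_sub_cancel_left]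

def cubeAt (n d L : ℕ) (v : Fin d → ℕ) : Finset (Fin d → Fin n) :=
  Fintype.piFinset fun i => {y : Fin n | v i ≤ (y : ℕ) ∧ (y : ℕ) < v i + L}

theorem card_cubeAt {n d L : ℕ} {v : Fin d → ℕ} (hv : ∀ i, v i + L ≤ n) :
    #(cubeAt n d L v) = L ^ d := by
  simp [cubeAt, Fin.card_filter_le_lt_add _ _ (hv _)]

section
open scoped Classical

theorem zeroCubeAt_iff {n d L q : ℕ} {W : (Fin d → Fin n) → Fin q} {v : Fin d → ℕ} :
    zeroCubeAt n d L q W v ↔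
      (∀ i, v i + L ≤ n) ∧ ∀ x ∈ cubeAt n d L v, W x ∈ ({b | (b : ℕ) = 0} : Finset (Fin q)) := by
  simp [zeroCubeAt, cubeAt]

theorem card_filter_zeroCubeAt_mul_le (n d L q : ℕ) (v : Fin d → ℕ) :
    #{W | zeroCubeAt n d L q W v} * q ^ L ^ d ≤ q ^ n ^ d := by
  by_cases hv : ∀ i, v i + L ≤ n
  · have hzero : #({b | (b : ℕ) = 0} : Finset (Fin q)) ≤ 1 :=
      card_le_one.2 fun a ha b hb => Fin.ext <| by simp_all
    simp only [zeroCubeAt_iff, hv, implies_true, true_and]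
    calc _ = #({b | (b : ℕ) = 0} : Finset (Fin q)) ^ L ^ d * q ^ #(cubeAt n d L v)ᶜ
          * q ^ #(cubeAt n d L v) := by
          rw [card_filter_forall_mem_mem, card_cubeAt hv, Fintype.card_fin]
      _ ≤ 1 * q ^ #(cubeAt n d L v)ᶜ * q ^ #(cubeAt n d L v) := by
          gcongr; exact pow_le_one₀ (Nat.zero_le _) hzero
      _ = q ^ n ^ d := by
          rw [one_mul, ← pow_add, card_compl_add_card, Fintype.card_fun, Fintype.card_fin,
            Fintype.card_fin]
  · simp [zeroCubeAt, hv]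

theorem card_filter_exists_zeroCubeAt_mul_le {n d L : ℕ} (q : ℕ) (hL : 1 ≤ L) :
    #{W | ∃ v, zeroCubeAt n d L q W v} * q ^ L ^ d ≤ n ^ d * q ^ n ^ d := by
  have hsub : ({W | ∃ v, zeroCubeAt n d L q W v} : Finset _) ⊆
      univ.biUnion fun v : Fin d → Fin n => {W | zeroCubeAt n d L q W (fun i => v i)} := by
    intro W hW
    obtain ⟨v, hv⟩ := (mem_filter.1 hW).2
    exact mem_biUnion.2 ⟨fun i => ⟨v i, by have := hv.1 i; omega⟩, mem_univ _, by simpa⟩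
  calc _ ≤ (∑ v : Fin d → Fin n, #{W | zeroCubeAt n d L q W (fun i => v i)}) * q ^ L ^ d := by
        gcongr; exact (card_le_card hsub).trans card_biUnion_le
    _ ≤ ∑ _v : Fin d → Fin n, q ^ n ^ d := by
        rw [sum_mul]; gcongr; exact card_filter_zeroCubeAt_mul_le ..
    _ = n ^ d * q ^ n ^ d := by simp

theorem natCard_forall_not_zeroCubeAt (n d L q : ℕ) :
    Nat.card {W : (Fin d → Fin n) → Fin q // ∀ v, ¬ zeroCubeAt n d L q W v} =
      q ^ n ^ d - #{W | ∃ v, zeroCubeAt n d L q W v} := by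
  rw [Nat.card_eq_fintype_card, Fintype.card_subtype]
  simp_rw [← not_exists]
  rw [filter_not, card_univ_sdiff]
  simp only [Fintype.card_fun, Fintype.card_fin]

end

theorem pow_mul_le_pow_mul_pred_of_logb_le {q n d m : ℕ} (hq : 2 ≤ q) (hn : 1 ≤ n)
    (h : (d : ℝ) * Real.logb q n + Real.logb q ((q : ℝ) / ((q : ℝ) - 1)) ≤ m) :
    n ^ d * q ≤ q ^ m * (q - 1) := by
  have hq1 : (1 : ℝ) < q := by exact_mod_cast hq
  have hq0 : (0 : ℝ) < q - 1 := by linarith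
  have hle : (n : ℝ) ^ d * (q / (q - 1)) ≤ (q : ℝ) ^ m := by
    rw [← Real.rpow_natCast (q : ℝ) m, ← Real.logb_le_iff_le_rpow hq1 (by positivity),
      Real.logb_mul (by positivity) (by positivity), Real.logb_pow]
    exact h
  have hreal : ((n ^ d * q : ℕ) : ℝ) ≤ ((q ^ m * (q - 1) : ℕ) : ℝ) := by
    push_cast [Nat.cast_sub (by omega : 1 ≤ q)]
    calc (n : ℝ) ^ d * q = (n : ℝ) ^ d * (q / (q - 1)) * (q - 1) := by field_simp
      _ ≤ _ := by gcongr
  exact_mod_cast hreal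

theorem pow_pred_le_sub_of_mul_le {q N b : ℕ} (hq : 1 ≤ q) (hN : 1 ≤ N)
    (hb : b * q ≤ (q - 1) * q ^ N) : q ^ (N - 1) ≤ q ^ N - b := by
  have hpred : q ^ (N - 1) * q = q ^ N := by rw [← pow_succ, Nat.sub_add_cancel hN]
  have hmul : (q ^ (N - 1) + b) * q ≤ q ^ N * q := by
    zify [hq] at hb hpred ⊢
    linarith
  have := Nat.le_of_mul_le_mul_right hmul hq
  omega

theorem stmt1_general (q n d L : ℕ) (hq : 2 ≤ q) (hn : 1 ≤ n) (hL : 1 ≤ L)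
    (hbound : (d : ℝ) * Real.logb q n + Real.logb q ((q : ℝ) / ((q : ℝ) - 1))
        ≤ (L : ℝ) ^ d) :
    q ^ (n ^ d - 1) ≤
      Nat.card {W : (Fin d → Fin n) → Fin q // ∀ v : Fin d → ℕ, ¬ zeroCubeAt n d L q W v} := by
  classical
  have hunion := card_filter_exists_zeroCubeAt_mul_le (n := n) (d := d) q hL
  have hnum : n ^ d * q ≤ q ^ L ^ d * (q - 1) :=
    pow_mul_le_pow_mul_pred_of_logb_le hq hn (by push_cast; exact hbound)
  set bad := #({W | ∃ v, zeroCubeAt n d L q W v} : Finset ((Fin d → Fin n) → Fin q))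
  have hbad : bad * q ≤ (q - 1) * q ^ n ^ d := by
    refine Nat.le_of_mul_le_mul_right ?_ (pow_pos (by omega : 0 < q) (L ^ d))
    calc bad * q * q ^ L ^ d = bad * q ^ L ^ d * q := by ring
      _ ≤ n ^ d * q ^ n ^ d * q := Nat.mul_le_mul_right q hunion
      _ = n ^ d * q * q ^ n ^ d := by ring
      _ ≤ q ^ L ^ d * (q - 1) * q ^ n ^ d := Nat.mul_le_mul_right _ hnum
      _ = (q - 1) * q ^ n ^ d * q ^ L ^ d := by ring
  rw [natCard_forall_not_zeroCubeAt]
  exact pow_pred_le_sub_of_mul_le (by omega) (Nat.one_le_pow _ _ hn) hbad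

theorem stmt1 (q n d L : ℕ) (hq : 2 ≤ q) (hn : 1 ≤ n) (hd : 1 ≤ d) (hL : 1 ≤ L)
    (hLn : L ≤ n)
    (hbound : (d : ℝ) * Real.logb q n + Real.logb q ((q : ℝ) / ((q : ℝ) - 1))
        ≤ (L : ℝ) ^ d) :
    q ^ (n ^ d - 1) ≤
      Nat.card {W : (Fin d → Fin n) → Fin q // ∀ v : Fin d → ℕ, ¬ zeroCubeAt n d L q W v} :=
  stmt1_general q n d L hq hn hL hbound
end

section
/- If L = L(n) satisfies L(n) → ∞ as n → ∞, then the asymptotic rate of the zero L-cubes free arrays approaches 1: lim_{n→∞} log_q|C_{d,q}(n,L(n))| / n^d = 1. -/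
/-- Any window `[a, a+L)` with `L ≥ 1` contains a multiple of `L`. -/
lemma exists_multiple (L a : ℕ) (hL : 1 ≤ L) : ∃ c, a ≤ c ∧ c < a + L ∧ L ∣ c := by
  have h := Nat.div_add_mod a L
  have hm : L * (a / L + 1) = L * (a / L) + L := by ring
  have hmod : a % L < L := Nat.mod_lt _ (by omega)
  rcases Nat.eq_zero_or_pos (a % L) with h0 | h0
  · exact ⟨a, le_refl a, by omega, ⟨a / L, by omega⟩⟩
  · exact ⟨L * (a / L + 1), by omega, by omega, ⟨a / L + 1, rfl⟩⟩

lemma card_upper (n d q Ln : ℕ) :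
    Nat.card {W : (Fin d → Fin n) → Fin q //
        ∀ v : Fin d → ℕ, ¬ zeroCubeAt n d Ln q W v} ≤ q ^ n ^ d := by
  classical
  have h1 : Nat.card {W : (Fin d → Fin n) → Fin q //
      ∀ v : Fin d → ℕ, ¬ zeroCubeAt n d Ln q W v} ≤
      Nat.card ((Fin d → Fin n) → Fin q) :=
    Nat.card_le_card_of_injective _ Subtype.val_injective
  have h2 : Nat.card ((Fin d → Fin n) → Fin q) = q ^ n ^ d := by
    simp [Nat.card_eq_fintype_card, Fintype.card_fun]
  omega

lemma card_lower (n d q Ln : ℕ) (hq : 2 ≤ q) (hLn : 1 ≤ Ln) :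
    q ^ (n ^ d - (n / Ln + 1) ^ d) ≤
      Nat.card {W : (Fin d → Fin n) → Fin q //
        ∀ v : Fin d → ℕ, ¬ zeroCubeAt n d Ln q W v} := by
  classical
  set P : (Fin d → Fin n) → Prop := fun x => ∀ i, Ln ∣ (x i : ℕ) with hP
  -- the injection
  set Φ : ({x : Fin d → Fin n // ¬ P x} → Fin q) →
      {W : (Fin d → Fin n) → Fin q // ∀ v : Fin d → ℕ, ¬ zeroCubeAt n d Ln q W v} :=
    fun f => ⟨fun x => if h : P x then ⟨1, by omega⟩ else f ⟨x, h⟩, by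
      intro v hv
      obtain ⟨hv1, hv2⟩ := hv
      have hc : ∀ i : Fin d, ∃ c, v i ≤ c ∧ c < v i + Ln ∧ Ln ∣ c := fun i =>
        exists_multiple Ln (v i) hLn
      choose c hc1 hc2 hc3 using hc
      have hcn : ∀ i, c i < n := fun i => lt_of_lt_of_le (hc2 i) (hv1 i)
      set x : Fin d → Fin n := fun i => ⟨c i, hcn i⟩ with hx
      have hPx : P x := fun i => hc3 i
      have h0 := hv2 x (fun i => ⟨hc1 i, hc2 i⟩)
      simp only [dif_pos hPx] at h0
      exact one_ne_zero h0⟩ with hΦ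
  have hinj : Function.Injective Φ := by
    intro f g hfg
    funext ⟨x, hx⟩
    have := congrArg (fun W => W.1 x) hfg
    simpa [hΦ, dif_neg hx] using this
  have h1 := Nat.card_le_card_of_injective Φ hinj
  have h2 : Nat.card ({x : Fin d → Fin n // ¬ P x} → Fin q) =
      q ^ (n ^ d - Fintype.card {x : Fin d → Fin n // P x}) := by
    simp [Nat.card_eq_fintype_card, Fintype.card_fun, Fintype.card_subtype_compl]
  -- bound the number of grid points
  have h3 : Fintype.card {x : Fin d → Fin n // P x} ≤ (n / Ln + 1) ^ d := by
    have : Fintype.card {x : Fin d → Fin n // P x} ≤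
        Fintype.card (Fin d → Fin (n / Ln + 1)) := by
      apply Fintype.card_le_of_injective
        (f := fun x i => (⟨(x.1 i : ℕ) / Ln, by
          have : (x.1 i : ℕ) < n := (x.1 i).2
          have := Nat.div_le_div_right (c := Ln) (Nat.le_of_lt this)
          omega⟩ : Fin (n / Ln + 1)))
      intro x y hxy
      apply Subtype.ext
      funext i
      have hxi := congrArg (fun f => (f i : ℕ)) hxy
      simp at hxi
      obtain ⟨kx, hkx⟩ := x.2 i
      obtain ⟨ky, hky⟩ := y.2 i
      apply Fin.ext
      have h1x : (x.1 i : ℕ) / Ln = kx := by rw [hkx]; exact Nat.mul_div_cancel_left _ (by omega)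
      have h1y : (y.1 i : ℕ) / Ln = ky := by rw [hky]; exact Nat.mul_div_cancel_left _ (by omega)
      show (x.1 i : ℕ) = (y.1 i : ℕ)
      rw [hkx, hky]
      congr 1
      omega
    simpa [Fintype.card_fun] using this
  calc q ^ (n ^ d - (n / Ln + 1) ^ d)
      ≤ q ^ (n ^ d - Fintype.card {x : Fin d → Fin n // P x}) :=
        Nat.pow_le_pow_right (by omega) (by omega)
    _ ≤ _ := by rw [← h2]; exact h1

/-- Pure real-analysis sandwich bounds given the counting bounds. -/
lemma rate_bounds (q d n Ln N : ℕ) (hq : 2 ≤ q) (hd : 1 ≤ d)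
    (hn1 : 1 ≤ n) (hLn : 1 ≤ Ln)
    (hlow : q ^ (n ^ d - (n / Ln + 1) ^ d) ≤ N) (hup : N ≤ q ^ n ^ d) :
    1 - ((Ln : ℝ)⁻¹ + (n : ℝ)⁻¹) ^ d ≤ Real.logb q N / (n : ℝ) ^ d ∧
      Real.logb q N / (n : ℝ) ^ d ≤ 1 := by
  have hq1 : (1 : ℝ) < (q : ℝ) := by exact_mod_cast (by omega : 1 < q)
  have hnpos : (0 : ℝ) < (n : ℝ) ^ d := by positivity
  have hNpos : 0 < N := lt_of_lt_of_le (Nat.pow_pos (by omega : 0 < q)) hlow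
  constructor
  · -- lower bound
    have hcast : ((q : ℝ) ^ (n ^ d - (n / Ln + 1) ^ d : ℕ)) ≤ (N : ℝ) := by
      exact_mod_cast hlow
    have hlogb : ((n ^ d - (n / Ln + 1) ^ d : ℕ) : ℝ) ≤ Real.logb q N := by
      have h1 : Real.logb q ((q : ℝ) ^ (n ^ d - (n / Ln + 1) ^ d : ℕ)) ≤ Real.logb q N :=
        Real.logb_le_logb_of_le hq1 (by positivity) hcast
      rwa [Real.logb_pow, Real.logb_self_eq_one hq1, mul_one] at h1
    have hsub : ((n ^ d : ℕ) : ℝ) - (((n / Ln + 1) ^ d : ℕ) : ℝ) ≤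
        ((n ^ d - (n / Ln + 1) ^ d : ℕ) : ℝ) := by
      rcases le_total ((n / Ln + 1) ^ d) (n ^ d) with h | h
      · rw [Nat.cast_sub h]
      · have h0 : (n ^ d - (n / Ln + 1) ^ d : ℕ) = 0 := by omega
        rw [h0, Nat.cast_zero, sub_nonpos]
        exact_mod_cast h
    have hbound : (((n / Ln + 1) ^ d : ℕ) : ℝ) ≤
        ((Ln : ℝ)⁻¹ + (n : ℝ)⁻¹) ^ d * (n : ℝ) ^ d := by
      push_cast
      rw [← mul_pow]
      apply pow_le_pow_left₀ (by positivity)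
      have hnR : (0 : ℝ) < (n : ℝ) := by exact_mod_cast hn1
      have hLR : (0 : ℝ) < (Ln : ℝ) := by exact_mod_cast hLn
      have hdiv : ((n / Ln : ℕ) : ℝ) ≤ (n : ℝ) / (Ln : ℝ) := Nat.cast_div_le
      have heq : ((Ln : ℝ)⁻¹ + (n : ℝ)⁻¹) * (n : ℝ) = (n : ℝ) / (Ln : ℝ) + 1 := by
        field_simp
      rw [heq]
      linarith
    have key : (n : ℝ) ^ d * (1 - ((Ln : ℝ)⁻¹ + (n : ℝ)⁻¹) ^ d) ≤ Real.logb q N := by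
      have : (n : ℝ) ^ d * (1 - ((Ln : ℝ)⁻¹ + (n : ℝ)⁻¹) ^ d) =
          ((n ^ d : ℕ) : ℝ) - ((Ln : ℝ)⁻¹ + (n : ℝ)⁻¹) ^ d * (n : ℝ) ^ d := by
        push_cast; ring
      rw [this]
      calc ((n ^ d : ℕ) : ℝ) - ((Ln : ℝ)⁻¹ + (n : ℝ)⁻¹) ^ d * (n : ℝ) ^ d
          ≤ ((n ^ d : ℕ) : ℝ) - (((n / Ln + 1) ^ d : ℕ) : ℝ) := by linarith
        _ ≤ ((n ^ d - (n / Ln + 1) ^ d : ℕ) : ℝ) := hsub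
        _ ≤ Real.logb q N := hlogb
    rw [le_div_iff₀ hnpos]
    linarith [key]
  · -- upper bound
    rw [div_le_one hnpos]
    have h1 : Real.logb q N ≤ Real.logb q ((q : ℝ) ^ (n ^ d : ℕ)) := by
      apply Real.logb_le_logb_of_le hq1 (by exact_mod_cast hNpos)
      exact_mod_cast hup
    rwa [Real.logb_pow, Real.logb_self_eq_one hq1, mul_one, Nat.cast_pow] at h1

theorem stmt3 (q d : ℕ) (hq : 2 ≤ q) (hd : 1 ≤ d) (L : ℕ → ℕ)
    (hL : Filter.Tendsto L Filter.atTop Filter.atTop) :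
    Filter.Tendsto
      (fun n : ℕ =>
        Real.logb q
            (Nat.card {W : (Fin d → Fin n) → Fin q //
              ∀ v : Fin d → ℕ, ¬ zeroCubeAt n d (L n) q W v}) / (n : ℝ) ^ d)
      Filter.atTop (nhds 1) := by
  have hGlim : Filter.Tendsto (fun n => 1 - ((L n : ℝ)⁻¹ + (n : ℝ)⁻¹) ^ d)
      Filter.atTop (nhds 1) := by
    have h1 : Filter.Tendsto (fun n => (L n : ℝ)⁻¹ + (n : ℝ)⁻¹) Filter.atTop (nhds 0) := by
      have ha : Filter.Tendsto (fun n : ℕ => ((L n : ℕ) : ℝ)) Filter.atTop Filter.atTop :=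
        (tendsto_natCast_atTop_atTop (R := ℝ)).comp hL
      have hb : Filter.Tendsto (fun n : ℕ => ((n : ℕ) : ℝ)⁻¹) Filter.atTop (nhds 0) :=
        tendsto_inv_atTop_nhds_zero_nat
      have ha' := ha.inv_tendsto_atTop
      simpa using ha'.add hb
    have h3 : Filter.Tendsto (fun n => ((L n : ℝ)⁻¹ + (n : ℝ)⁻¹) ^ d)
        Filter.atTop (nhds 0) := by
      have := h1.pow d
      simpa [zero_pow (by omega : d ≠ 0)] using this
    have := (tendsto_const_nhds (x := (1 : ℝ)) (f := Filter.atTop (α := ℕ))).sub h3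
    simpa using this
  have hev : ∀ᶠ n : ℕ in Filter.atTop, 1 ≤ n ∧ 1 ≤ L n := by
    filter_upwards [Filter.eventually_ge_atTop 1, hL.eventually_ge_atTop 1] with n h1 h2
    exact ⟨h1, h2⟩
  apply tendsto_of_tendsto_of_tendsto_of_le_of_le' hGlim tendsto_const_nhds
  · filter_upwards [hev] with n hn
    exact (rate_bounds q d n (L n) _ hq hd hn.1 hn.2
      (card_lower n d q (L n) hq hn.2) (card_upper n d q (L n))).1
  · filter_upwards [hev] with n hn
    exact (rate_bounds q d n (L n) _ hq hd hn.1 hn.2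
      (card_lower n d q (L n) hq hn.2) (card_upper n d q (L n))).2
end

section
/- Let q ≥ 2 and n, d, L be positive integers with L ≤ n. The number of arrays W ∈ Σ_q^{[n]^d} that contain two identical L-cubes (i.e., there exist distinct u, v ∈ [n-L+1]^d with W_{u+[L]^d} = W_{v+[L]^d}) is at most n^{2d} · q^(n^d − L^d). -/
/-!
Fix the positions `u ≠ v` and a coordinate `i₀` with `u i₀ ≠ v i₀`. If the two cubes carry the
same pattern, every cell of the `u`-cube has the value of its translate by `v - u`, which lies
strictly further in direction `v i₀ - u i₀`; following translates until the `u`-cube is left shows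
that such an array is determined by its values off the `u`-cube, even when the cubes overlap. So
at most `q ^ (n ^ d - L ^ d)` arrays have identical cubes at `u` and `v`, and a union bound over the
at most `n ^ (2 * d)` pairs of positions finishes the count.
-/

/-- `W` contains two identical `L`-cubes at distinct positions `u, v ∈ ℕ^d`:
both cubes `u + [L]^d` and `v + [L]^d` fit inside `[n]^d` and the restrictions of
`W` to them agree (as functions of the offset in `[L]^d`). -/
def identicalCubesAt (n d L q : ℕ) (W : (Fin d → Fin n) → Fin q)
    (u v : Fin d → ℕ) : Prop :=
  u ≠ v ∧ (∀ i, u i + L ≤ n) ∧ (∀ i, v i + L ≤ n) ∧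
  ∀ (x y : Fin d → Fin n) (off : Fin d → Fin L),
    (∀ i, (x i : ℕ) = u i + (off i : ℕ)) → (∀ i, (y i : ℕ) = v i + (off i : ℕ)) →
    W x = W y

open Finset

theorem eq_of_eqOn_compl_of_wellFounded {α β : Type*} {r : α → α → Prop} (hr : WellFounded r)
    {S : Set α} {T : α → α → Prop} (hT : ∀ x ∈ S, ∃ y, r y x ∧ T x y) {W W' : α → β}
    (hW : ∀ x y, T x y → W x = W y) (hW' : ∀ x y, T x y → W' x = W' y)
    (hout : Set.EqOn W W' Sᶜ) : W = W' := by
  funext x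
  induction x using hr.induction with
  | _ x ih =>
    by_cases hx : x ∈ S
    · obtain ⟨y, hyx, hxy⟩ := hT x hx
      rw [hW x y hxy, hW' x y hxy, ih y hyx]
    · exact hout hx

section Cubes

variable {n d L : ℕ}

def cube (n L : ℕ) (u : Fin d → ℕ) : Finset (Fin d → Fin n) :=
  univ.filter fun x => ∀ i, u i ≤ x i ∧ (x i : ℕ) < u i + L

def SameCubeOffset (L : ℕ) (u v : Fin d → ℕ) (x y : Fin d → Fin n) : Prop :=
  ∃ off : Fin d → Fin L, (∀ i, (x i : ℕ) = u i + off i) ∧ ∀ i, (y i : ℕ) = v i + off i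

theorem mem_cube {u : Fin d → ℕ} {x : Fin d → Fin n} :
    x ∈ cube n L u ↔ ∀ i, u i ≤ x i ∧ (x i : ℕ) < u i + L := by
  simp [cube]

def cubeEquivOffset {u : Fin d → ℕ} (hu : ∀ i, u i + L ≤ n) : cube n L u ≃ (Fin d → Fin L) where
  toFun x i := ⟨x.1 i - u i, by have := mem_cube.1 x.2 i; omega⟩
  invFun off := ⟨fun i => ⟨u i + off i, by have := hu i; omega⟩,
    mem_cube.2 fun i => by simp⟩
  left_inv x := by
    ext i
    have := mem_cube.1 x.2 i
    dsimp only
    omega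
  right_inv off := by
    ext i
    simp

theorem card_compl_cube {u : Fin d → ℕ} (hu : ∀ i, u i + L ≤ n) :
    (cube n L u)ᶜ.card = n ^ d - L ^ d := by
  rw [card_compl, ← Fintype.card_coe (cube n L u), Fintype.card_congr (cubeEquivOffset hu)]
  simp

theorem exists_sameCubeOffset {u v : Fin d → ℕ} (hv : ∀ i, v i + L ≤ n) {x : Fin d → Fin n}
    (hx : x ∈ cube n L u) : ∃ y : Fin d → Fin n, SameCubeOffset L u v x y := by
  have hx := mem_cube.1 hx
  refine ⟨fun i => ⟨v i + (x i - u i), by have := hx i; have := hv i; omega⟩,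
    fun i => ⟨x i - u i, by have := hx i; omega⟩, fun i => ?_, fun i => rfl⟩
  have := hx i
  dsimp only
  omega

theorem exists_wellFounded_of_sameCubeOffset {u v : Fin d → ℕ} {i₀ : Fin d} (h : u i₀ ≠ v i₀) :
    ∃ r : (Fin d → Fin n) → (Fin d → Fin n) → Prop,
      WellFounded r ∧ ∀ x y, SameCubeOffset L u v x y → r y x := by
  rcases h.lt_or_gt with h | h
  · refine ⟨InvImage (· > ·) (· i₀), InvImage.wf _ wellFounded_gt, ?_⟩
    rintro x y ⟨off, hx, hy⟩
    simp only [InvImage, gt_iff_lt, Fin.lt_def, hx, hy]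
    omega
  · refine ⟨InvImage (· < ·) (· i₀), InvImage.wf _ wellFounded_lt, ?_⟩
    rintro x y ⟨off, hx, hy⟩
    simp only [InvImage, Fin.lt_def, hx, hy]
    omega

variable {q : ℕ}

theorem eq_of_identicalCubesAt_of_eqOn_compl_cube {u v : Fin d → ℕ}
    {W W' : (Fin d → Fin n) → Fin q} (hW : identicalCubesAt n d L q W u v)
    (hW' : identicalCubesAt n d L q W' u v) (hout : ∀ x ∉ cube n L u, W x = W' x) : W = W' := by
  obtain ⟨hne, -, hv, hWeq⟩ := hW
  obtain ⟨i₀, hi₀⟩ := Function.ne_iff.1 hne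
  obtain ⟨r, hr, hstep⟩ := exists_wellFounded_of_sameCubeOffset (n := n) (L := L) hi₀
  refine eq_of_eqOn_compl_of_wellFounded hr (S := ↑(cube n L u)) (T := SameCubeOffset L u v)
    (fun x hx => ?_) (fun x y ⟨off, hx, hy⟩ => hWeq x y off hx hy)
    (fun x y ⟨off, hx, hy⟩ => hW'.2.2.2 x y off hx hy) fun x hx => hout x hx
  obtain ⟨y, hxy⟩ := exists_sameCubeOffset hv hx
  exact ⟨y, hstep x y hxy, hxy⟩

open scoped Classical in
theorem card_filter_identicalCubesAt_le (u v : Fin d → ℕ) :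
    (univ.filter fun W => identicalCubesAt n d L q W u v).card ≤ q ^ (n ^ d - L ^ d) := by
  by_cases hu : ∀ i, u i + L ≤ n
  · calc _ ≤ (univ : Finset (↥(cube n L u)ᶜ → Fin q)).card := by
          refine card_le_card_of_injOn (fun W (x : ↥(cube n L u)ᶜ) => W x)
            (fun _ _ => mem_coe.2 (mem_univ _)) ?_
          intro W hW W' hW' h
          simp only [coe_filter, mem_univ, true_and] at hW hW'
          exact eq_of_identicalCubesAt_of_eqOn_compl_cube hW hW'
            fun x hx => congrFun h ⟨x, mem_compl.2 hx⟩
      _ = q ^ (n ^ d - L ^ d) := by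
          rw [card_univ, Fintype.card_fun, Fintype.card_coe, card_compl_cube hu, Fintype.card_fin]
  · rw [filter_false_of_mem fun W _ hW => hu hW.2.1]
    simp

end Cubes

theorem stmt4_general (q n d L : ℕ) (hL : 1 ≤ L) :
    Nat.card {W : (Fin d → Fin n) → Fin q //
        ∃ u v : Fin d → ℕ, identicalCubesAt n d L q W u v}
      ≤ n ^ (2 * d) * q ^ (n ^ d - L ^ d) := by
  classical
  let pairs := (univ : Finset ((Fin d → Fin n) × (Fin d → Fin n)))
  have hcover : (univ.filter fun W => ∃ u v, identicalCubesAt n d L q W u v) ⊆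
      pairs.biUnion fun p => univ.filter fun W =>
        identicalCubesAt n d L q W (fun i => p.1 i) (fun i => p.2 i) := by
    intro W hW
    obtain ⟨u, v, h⟩ := (mem_filter.1 hW).2
    have hlt : ∀ w : Fin d → ℕ, (∀ i, w i + L ≤ n) → ∀ i, w i < n := fun w hw i => by
      have := hw i; omega
    exact mem_biUnion.2 ⟨(fun i => ⟨u i, hlt u h.2.1 i⟩, fun i => ⟨v i, hlt v h.2.2.1 i⟩),
      mem_univ _, mem_filter.2 ⟨mem_univ _, h⟩⟩
  rw [Nat.card_eq_fintype_card, Fintype.card_subtype]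
  calc _ ≤ ∑ p ∈ pairs, (univ.filter fun W =>
          identicalCubesAt n d L q W (fun i => p.1 i) (fun i => p.2 i)).card :=
        (card_le_card hcover).trans card_biUnion_le
    _ ≤ ∑ _p ∈ pairs, q ^ (n ^ d - L ^ d) :=
        sum_le_sum fun p _ => card_filter_identicalCubesAt_le _ _
    _ = n ^ (2 * d) * q ^ (n ^ d - L ^ d) := by simp [pairs, two_mul, pow_add]

theorem stmt4 (q n d L : ℕ) (hq : 2 ≤ q) (hn : 1 ≤ n) (hd : 1 ≤ d) (hL : 1 ≤ L)
    (hLn : L ≤ n) :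
    Nat.card {W : (Fin d → Fin n) → Fin q //
        ∃ u v : Fin d → ℕ, identicalCubesAt n d L q W u v}
      ≤ n ^ (2 * d) * q ^ (n ^ d - L ^ d) :=
  stmt4_general q n d L hL
end

section
/- Let q ≥ 2 and n, d be positive integers, and let L be a positive integer with L^d ≥ 2d·log_q(n) + log_q(q/(q-1)) and L ≤ n. Then |D_{d,q}(n,L)| ≥ q^(n^d − 1), i.e., the redundancy of the set of L-cubes unique arrays is at most 1. -/
/-! Union bound over pairs of positions. If `u ≠ v`, pick a coordinate `j` with `u j < v j`:
an array with identical cubes at `u` and `v` copies each cell of the `v`-cube from a cell with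
smaller `j`-coordinate, so by induction on that coordinate it is determined by its values off the
`v`-cube, and there are at most `q ^ (n ^ d - L ^ d)` such arrays. With at most `n ^ (2 d)` pairs,
the hypothesis on `L ^ d` (equivalently `n ^ (2 d) * q ≤ q ^ (L ^ d) * (q - 1)`) leaves at least
`q ^ (n ^ d) - n ^ (2 d) * q ^ (n ^ d - L ^ d) ≥ q ^ (n ^ d - 1)` arrays without repeated cubes. -/

section Respects

variable {α β : Type*} (R : α → α → Prop)

theorem eq_of_respects {μ : α → ℕ} (hμ : ∀ x y, R x y → μ y < μ x) {W₁ W₂ : α → β}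
    (h₁ : ∀ x y, R x y → W₁ x = W₁ y) (h₂ : ∀ x y, R x y → W₂ x = W₂ y)
    (hfree : ∀ x, (¬∃ y, R x y) → W₁ x = W₂ x) : W₁ = W₂ := by
  funext x
  induction hx : μ x using Nat.strong_induction_on generalizing x with
  | _ m ih =>
    by_cases h : ∃ y, R x y
    · obtain ⟨y, hxy⟩ := h
      rw [h₁ x y hxy, h₂ x y hxy]
      exact ih _ (hx ▸ hμ x y hxy) y rfl
    · exact hfree x h

theorem card_le_pow_card_of_respects [Finite α] [Finite β] {μ : α → ℕ}
    (hμ : ∀ x y, R x y → μ y < μ x) (P : (α → β) → Prop)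
    (hP : ∀ W, P W → ∀ x y, R x y → W x = W y) :
    Nat.card {W // P W} ≤ Nat.card β ^ Nat.card {x // ¬∃ y, R x y} := by
  rw [← Nat.card_fun]
  refine Nat.card_le_card_of_injective (fun W x => W.1 x.1) fun W₁ W₂ h => Subtype.ext ?_
  exact eq_of_respects R hμ (hP _ W₁.2) (hP _ W₂.2) fun x hx => congrFun h ⟨x, hx⟩

end Respects

def cubeCorresp (L : ℕ) {d n : ℕ} (v u : Fin d → ℕ) (x y : Fin d → Fin n) : Prop :=
  ∃ off : Fin d → Fin L, (∀ i, (x i : ℕ) = v i + off i) ∧ (∀ i, (y i : ℕ) = u i + off i)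

section Cubes

variable {n d L q : ℕ} {u v : Fin d → ℕ}

theorem card_exists_cubeCorresp (hu : ∀ i, u i + L ≤ n) (hv : ∀ i, v i + L ≤ n) :
    Nat.card {x : Fin d → Fin n // ∃ y, cubeCorresp L v u x y} = L ^ d := by
  let cell (off : Fin d → Fin L) : {x : Fin d → Fin n // ∃ y, cubeCorresp L v u x y} :=
    ⟨fun i => ⟨v i + off i, by have := hv i; omega⟩,
      fun i => ⟨u i + off i, by have := hu i; omega⟩, off, fun _ => rfl, fun _ => rfl⟩
  have hcell : Function.Bijective cell := by
    refine ⟨fun off off' h => funext fun i => Fin.ext ?_, fun ⟨x, y, off, hx, _⟩ => ⟨off, ?_⟩⟩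
    · have := congrArg
        (fun c : {x : Fin d → Fin n // ∃ y, cubeCorresp L v u x y} => (c.1 i : ℕ)) h
      simpa [cell] using this
    · exact Subtype.ext (funext fun i => Fin.ext (hx i).symm)
  rw [← Nat.card_congr (Equiv.ofBijective cell hcell)]
  simp

theorem card_not_exists_cubeCorresp (hu : ∀ i, u i + L ≤ n) (hv : ∀ i, v i + L ≤ n) :
    Nat.card {x : Fin d → Fin n // ¬∃ y, cubeCorresp L v u x y} = n ^ d - L ^ d := by
  classical
  rw [Nat.card_eq_fintype_card, Fintype.card_subtype_compl,
    ← Nat.card_eq_fintype_card (α := {x // ∃ y, cubeCorresp L v u x y}),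
    card_exists_cubeCorresp hu hv]
  simp

theorem identicalCubesAt.respects {W : (Fin d → Fin n) → Fin q}
    (h : identicalCubesAt n d L q W u v) (x y : Fin d → Fin n) (hxy : cubeCorresp L v u x y) :
    W x = W y :=
  let ⟨off, hx, hy⟩ := hxy
  (h.2.2.2 y x off hy hx).symm

theorem identicalCubesAt_comm {W : (Fin d → Fin n) → Fin q} :
    identicalCubesAt n d L q W u v ↔ identicalCubesAt n d L q W v u := by
  constructor <;>
  · rintro ⟨hne, hu, hv, hc⟩
    exact ⟨hne.symm, hv, hu, fun x y off hx hy => (hc y x off hy hx).symm⟩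

theorem card_identicalCubesAt_le_of_lt (hu : ∀ i, u i + L ≤ n) (hv : ∀ i, v i + L ≤ n)
    {j : Fin d} (hj : u j < v j) :
    Nat.card {W // identicalCubesAt n d L q W u v} ≤ q ^ (n ^ d - L ^ d) := by
  have hμ : ∀ x y : Fin d → Fin n, cubeCorresp L v u x y → (y j : ℕ) < x j := by
    rintro x y ⟨off, hx, hy⟩
    rw [hx j, hy j]
    omega
  have := card_le_pow_card_of_respects _ hμ _
    fun W (hW : identicalCubesAt n d L q W u v) => hW.respects
  rwa [Nat.card_eq_fintype_card (α := Fin q), Fintype.card_fin,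
    card_not_exists_cubeCorresp hu hv] at this

theorem card_identicalCubesAt_le (u v : Fin d → ℕ) :
    Nat.card {W // identicalCubesAt n d L q W u v} ≤ q ^ (n ^ d - L ^ d) := by
  by_cases h : u ≠ v ∧ (∀ i, u i + L ≤ n) ∧ (∀ i, v i + L ≤ n)
  · obtain ⟨huv, hu, hv⟩ := h
    obtain ⟨j, hj⟩ := Function.ne_iff.mp huv
    rcases hj.lt_or_gt with hj | hj
    · exact card_identicalCubesAt_le_of_lt hu hv hj
    · rw [Nat.card_congr (Equiv.subtypeEquivRight fun W => identicalCubesAt_comm)]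
      exact card_identicalCubesAt_le_of_lt hv hu hj
  · have : IsEmpty {W // identicalCubesAt n d L q W u v} :=
      ⟨fun ⟨_, hW⟩ => h ⟨hW.1, hW.2.1, hW.2.2.1⟩⟩
    simp

open Finset in
theorem card_exists_identicalCubesAt_le (hL : 0 < L) :
    Nat.card {W // ∃ u v, identicalCubesAt n d L q W u v} ≤
      n ^ d * n ^ d * q ^ (n ^ d - L ^ d) := by
  classical
  let pairBad (p : (Fin d → Fin n) × (Fin d → Fin n)) : Finset ((Fin d → Fin n) → Fin q) :=
    univ.filter fun W => identicalCubesAt n d L q W (p.1 · ) (p.2 · )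
  have hsub : univ.filter (fun W => ∃ u v, identicalCubesAt n d L q W u v) ⊆
      univ.biUnion pairBad := by
    intro W hW
    obtain ⟨u, v, h⟩ := (mem_filter.mp hW).2
    have hun : ∀ i, u i < n := fun i => by have := h.2.1 i; omega
    have hvn : ∀ i, v i < n := fun i => by have := h.2.2.1 i; omega
    exact mem_biUnion.mpr ⟨(fun i => ⟨u i, hun i⟩, fun i => ⟨v i, hvn i⟩), mem_univ _,
      by simpa [pairBad] using h⟩
  rw [Nat.card_eq_fintype_card, Fintype.card_subtype]
  calc _ ≤ (univ.biUnion pairBad).card := card_le_card hsub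
    _ ≤ (univ : Finset ((Fin d → Fin n) × (Fin d → Fin n))).card * q ^ (n ^ d - L ^ d) :=
        card_biUnion_le_card_mul _ _ _ fun p _ => by
          rw [← Fintype.card_subtype, ← Nat.card_eq_fintype_card]
          exact card_identicalCubesAt_le _ _
    _ = _ := by simp

end Cubes

theorem pow_mul_self_mul_le_of_logb_le {q n d m : ℕ} (hq : 2 ≤ q) (hn : 0 < n)
    (h : 2 * (d : ℝ) * Real.logb q n + Real.logb q ((q : ℝ) / ((q : ℝ) - 1)) ≤ m) :
    n ^ d * n ^ d * q ≤ q ^ m * (q - 1) := by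
  have hq' : (1 : ℝ) < q := by exact_mod_cast hq
  have hq₁ : (0 : ℝ) < q - 1 := by linarith
  have hlog : Real.logb q ((n : ℝ) ^ d * n ^ d * (q / (q - 1))) ≤ m := by
    rw [Real.logb_mul (by positivity) (by positivity), Real.logb_mul (by positivity)
      (by positivity), Real.logb_pow]
    linarith
  have hle := (Real.logb_le_iff_le_rpow hq' (by positivity)).mp hlog
  rw [Real.rpow_natCast] at hle
  have hR : ((n : ℝ) ^ d * n ^ d * q) ≤ q ^ m * (q - 1) :=
    calc (n : ℝ) ^ d * n ^ d * q = (n : ℝ) ^ d * n ^ d * (q / (q - 1)) * (q - 1) := by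
          field_simp
      _ ≤ q ^ m * (q - 1) := by gcongr
  have hq1 : 1 ≤ q := by omega
  exact_mod_cast (show ((n ^ d * n ^ d * q : ℕ) : ℝ) ≤ ((q ^ m * (q - 1) : ℕ) : ℝ) by
    push_cast [Nat.cast_sub hq1]; exact hR)

theorem pow_pred_add_mul_pow_sub_le {q a b c : ℕ} (hq : 0 < q) (hb : 1 ≤ b) (hba : b ≤ a)
    (h : c * q ≤ q ^ b * (q - 1)) : q ^ (a - 1) + c * q ^ (a - b) ≤ q ^ a := by
  have hqb : q ^ b = q ^ (b - 1) * q := by rw [← pow_succ]; congr 1; omega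
  have hc : c ≤ q ^ (b - 1) * (q - 1) := by
    rw [hqb, mul_right_comm] at h
    exact Nat.le_of_mul_le_mul_right h hq
  calc q ^ (a - 1) + c * q ^ (a - b) = (q ^ (b - 1) + c) * q ^ (a - b) := by
        rw [add_mul, ← pow_add]; congr 2; omega
    _ ≤ (q ^ (b - 1) + q ^ (b - 1) * (q - 1)) * q ^ (a - b) := by gcongr
    _ = q ^ a := by
        rw [← mul_one_add, show 1 + (q - 1) = q by omega, ← hqb, ← pow_add]; congr 1; omega

theorem stmt5_general (q n d L : ℕ) (hq : 2 ≤ q) (hL : 1 ≤ L)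
    (hLn : L ≤ n)
    (hbound : 2 * (d : ℝ) * Real.logb q n + Real.logb q ((q : ℝ) / ((q : ℝ) - 1))
        ≤ (L : ℝ) ^ d) :
    q ^ (n ^ d - 1) ≤
      Nat.card {W : (Fin d → Fin n) → Fin q //
        ∀ u v : Fin d → ℕ, ¬ identicalCubesAt n d L q W u v} := by
  classical
  have hbad := card_exists_identicalCubesAt_le (n := n) (d := d) (q := q) hL
  have hnum : n ^ d * n ^ d * q ≤ q ^ (L ^ d) * (q - 1) :=
    pow_mul_self_mul_le_of_logb_le hq (Nat.lt_of_lt_of_le hL hLn) (by exact_mod_cast hbound)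
  have hsplit := pow_pred_add_mul_pow_sub_le (by omega) (Nat.one_le_pow _ _ hL)
    (Nat.pow_le_pow_left hLn d) hnum
  have hgood : Nat.card {W : (Fin d → Fin n) → Fin q //
      ∀ u v : Fin d → ℕ, ¬ identicalCubesAt n d L q W u v} =
      q ^ (n ^ d) - Nat.card {W // ∃ u v, identicalCubesAt n d L q W u v} := by
    simp_rw [← not_exists]
    rw [Nat.card_eq_fintype_card, Fintype.card_subtype_compl, Nat.card_eq_fintype_card]
    simp
  omega

theorem stmt5 (q n d L : ℕ) (hq : 2 ≤ q) (hn : 1 ≤ n) (hd : 1 ≤ d) (hL : 1 ≤ L)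
    (hLn : L ≤ n)
    (hbound : 2 * (d : ℝ) * Real.logb q n + Real.logb q ((q : ℝ) / ((q : ℝ) - 1))
        ≤ (L : ℝ) ^ d) :
    q ^ (n ^ d - 1) ≤
      Nat.card {W : (Fin d → Fin n) → Fin q //
        ∀ u v : Fin d → ℕ, ¬ identicalCubesAt n d L q W u v} :=
  stmt5_general q n d L hq hL hLn hbound
end

section
/- For every d ≥ 2 and every positive integer V, the number of minimal d-dimensional V-boxes satisfies f_d(V) ≥ d·(⌊V^{1/d}⌋)^{d-1} − d + 1. -/
/-- A `d`-dimensional box with side lengths `x` is a minimal `V`-box. -/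
def IsMinBox (d V : ℕ) (x : Fin d → ℕ) : Prop :=
  (∀ i, 1 ≤ x i) ∧ V ≤ ∏ i, x i ∧
  ∀ y : Fin d → ℕ, (∀ i, 1 ≤ y i) → (∀ i, y i ≤ x i) → y ≠ x → ∏ i, y i < V

/-- `f_d(V)`, the number of minimal `d`-dimensional `V`-boxes. -/
noncomputable def numMinBoxes (d V : ℕ) : ℕ :=
  Nat.card {x : Fin d → ℕ // IsMinBox d V x}

/-!
Let `m = ⌊V^{1/d}⌋`, so `m^d ≤ V`. Choosing `d - 1` sides in `[1, m]` and completing them at a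
position `j` by the side `⌈V / (product of the chosen sides)⌉ ≥ m` gives a minimal `V`-box: the
completing side is the longest one, and once shortening the longest side drops the volume below
`V`, shortening any other side does too. The completing side exceeds `m` unless all chosen sides
equal `m`, so boxes completed at different positions can only coincide in the cube of side `m`.
This leaves `d·m^{d-1} - (d - 1)` distinct minimal boxes.
-/

open Finset

section MinBox

variable {d V : ℕ} {x : Fin d → ℕ}

theorem IsMinBox.apply_le_max (hx : IsMinBox d V x) (i : Fin d) : x i ≤ max 1 V := by
  obtain ⟨hx1, -, hmin⟩ := hx
  by_contra! hi
  set y := Function.update x i (x i - 1)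
  have hy1 : ∀ k, 1 ≤ y k := by
    intro k
    by_cases hk : k = i
    · subst hk; simp only [y, Function.update_self]; omega
    · simp [y, hk, hx1 k]
  have hyx : ∀ k, y k ≤ x k := by
    intro k
    by_cases hk : k = i
    · subst hk; simp [y]
    · simp [y, hk]
  have hyx_ne : y ≠ x := fun h => by
    have := congrFun h i
    simp only [y, Function.update_self] at this
    omega
  have hyi : y i ≤ ∏ k, y k := single_le_prod' (fun k _ => hy1 k) (mem_univ i)
  have hy_lt := hmin y hy1 hyx hyx_ne
  simp only [y, Function.update_self] at hyi hy_lt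
  omega

theorem finite_setOf_isMinBox (d V : ℕ) : {x : Fin d → ℕ | IsMinBox d V x}.Finite :=
  (Set.finite_Iic fun _ => max 1 V).subset fun _ hx i => hx.apply_le_max i

theorem isMinBox_of_prod_lt_add {j : Fin d} (hx : ∀ i, 1 ≤ x i) (hj : ∀ i, x i ≤ x j)
    (hV : V ≤ ∏ i, x i) (hlt : ∏ i, x i < V + ∏ i ∈ univ.erase j, x i) : IsMinBox d V x := by
  refine ⟨hx, hV, fun y hy1 hyx hyx_ne => ?_⟩
  obtain ⟨i, hi⟩ : ∃ i, y i < x i := by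
    by_contra! h
    exact hyx_ne (funext fun i => le_antisymm (hyx i) (h i))
  have hxR : x i * ∏ k ∈ univ.erase i, x k = ∏ k, x k := mul_prod_erase univ x (mem_univ i)
  have hRj : ∏ k ∈ univ.erase j, x k ≤ ∏ k ∈ univ.erase i, x k := by
    refine Nat.le_of_mul_le_mul_left ?_ (hx i)
    calc x i * ∏ k ∈ univ.erase j, x k ≤ x j * ∏ k ∈ univ.erase j, x k :=
          Nat.mul_le_mul_right _ (hj i)
      _ = x i * ∏ k ∈ univ.erase i, x k := by rw [mul_prod_erase univ x (mem_univ j), hxR]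
  have hy : ∏ k, y k ≤ (x i - 1) * ∏ k ∈ univ.erase i, x k := by
    rw [← mul_prod_erase univ y (mem_univ i)]
    exact Nat.mul_le_mul (by omega) (prod_le_prod' fun k _ => hyx k)
  rw [Nat.sub_one_mul] at hy
  have := Nat.le_mul_of_pos_left (∏ k ∈ univ.erase i, x k) (hx i)
  omega

end MinBox

def ceilBox (V : ℕ) {e : ℕ} (j : Fin (e + 1)) (a : Fin e → ℕ) : Fin (e + 1) → ℕ :=
  j.insertNth (V ⌈/⌉ ∏ k, a k) a

section CeilBox

variable {V m e : ℕ} {a : Fin e → ℕ}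

theorem prod_le_pow_of_mem_Icc (ha : ∀ k, a k ∈ Icc 1 m) : ∏ k, a k ≤ m ^ e := by
  simpa using prod_le_pow_card univ a m fun k _ => (mem_Icc.1 (ha k)).2

theorem le_ceilDiv_prod (hmV : m ^ (e + 1) ≤ V) (ha : ∀ k, a k ∈ Icc 1 m) :
    m ≤ V ⌈/⌉ ∏ k, a k := by
  have hP : 0 < ∏ k, a k := prod_pos fun k _ => (mem_Icc.1 (ha k)).1
  refine Nat.le_of_mul_le_mul_left ?_ hP
  calc (∏ k, a k) * m ≤ m ^ e * m :=
        Nat.mul_le_mul_right _ (prod_le_pow_of_mem_Icc ha)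
    _ = m ^ (e + 1) := (pow_succ m e).symm
    _ ≤ V := hmV
    _ ≤ (∏ k, a k) * (V ⌈/⌉ ∏ k, a k) := le_smul_ceilDiv hP

theorem lt_ceilDiv_prod (hmV : m ^ (e + 1) ≤ V) (ha : ∀ k, a k ∈ Icc 1 m)
    (ha_ne : a ≠ fun _ => m) : m < V ⌈/⌉ ∏ k, a k := by
  have hP : 0 < ∏ k, a k := prod_pos fun k _ => (mem_Icc.1 (ha k)).1
  obtain ⟨k, hk⟩ : ∃ k, a k < m := by
    by_contra! h
    exact ha_ne (funext fun k => le_antisymm (mem_Icc.1 (ha k)).2 (h k))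
  have hPm : ∏ k, a k < m ^ e := by
    simpa using prod_lt_prod (fun k _ => (mem_Icc.1 (ha k)).1) (fun k _ => (mem_Icc.1 (ha k)).2)
      ⟨k, mem_univ k, hk⟩
  rw [← not_le, ceilDiv_le_iff_le_mul hP, not_le]
  calc (∏ k, a k) * m < m ^ e * m :=
        Nat.mul_lt_mul_of_pos_right hPm (by have := (mem_Icc.1 (ha k)).1; omega)
    _ = m ^ (e + 1) := (pow_succ m e).symm
    _ ≤ V := hmV

theorem prod_ceilBox (j : Fin (e + 1)) :
    ∏ i, ceilBox V j a i = (V ⌈/⌉ ∏ k, a k) * ∏ k, a k :=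
  Fin.prod_insertNth _ _ _

theorem isMinBox_ceilBox (hm : 1 ≤ m) (hmV : m ^ (e + 1) ≤ V) (ha : ∀ k, a k ∈ Icc 1 m)
    (j : Fin (e + 1)) : IsMinBox (e + 1) V (ceilBox V j a) := by
  have hP : 0 < ∏ k, a k := prod_pos fun k _ => (mem_Icc.1 (ha k)).1
  have hmc : m ≤ V ⌈/⌉ ∏ k, a k := le_ceilDiv_prod hmV ha
  have hj : ceilBox V j a j = V ⌈/⌉ ∏ k, a k := Fin.insertNth_apply_same _ _ _
  have hk (k : Fin e) : ceilBox V j a (j.succAbove k) = a k :=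
    Fin.insertNth_apply_succAbove _ _ _ _
  have hrest : ∏ i ∈ univ.erase j, ceilBox V j a i = ∏ k, a k := by
    refine Nat.eq_of_mul_eq_mul_left (show 0 < V ⌈/⌉ ∏ k, a k by omega) ?_
    rw [← hj, mul_prod_erase univ _ (mem_univ j), prod_ceilBox, hj]
  refine isMinBox_of_prod_lt_add (j := j) ?_ ?_ ?_ ?_
  · refine (Fin.forall_iff_succAbove j).2 ⟨by omega, fun k => ?_⟩
    rw [hk]; exact (mem_Icc.1 (ha k)).1
  · refine (Fin.forall_iff_succAbove j).2 ⟨le_rfl, fun k => ?_⟩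
    rw [hk, hj]; exact (mem_Icc.1 (ha k)).2.trans hmc
  · rw [prod_ceilBox, mul_comm]; exact le_smul_ceilDiv hP
  · have hc : (∏ k, a k) * (V ⌈/⌉ ∏ k, a k - 1) < V := by
      rw [← not_le, ← ceilDiv_le_iff_le_mul hP]; omega
    rw [Nat.mul_sub_one] at hc
    rw [prod_ceilBox, hrest, mul_comm]
    omega

theorem ceilBox_apply_le {j j' : Fin (e + 1)} (hjj : j ≠ j') (ha : ∀ k, a k ∈ Icc 1 m) :
    ceilBox V j a j' ≤ m := by
  obtain ⟨k, rfl⟩ := Fin.exists_succAbove_eq hjj.symm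
  rw [ceilBox, Fin.insertNth_apply_succAbove]
  exact (mem_Icc.1 (ha k)).2

theorem eq_const_of_ceilBox_eq {a' : Fin e → ℕ} {j j' : Fin (e + 1)} (hmV : m ^ (e + 1) ≤ V)
    (hjj : j ≠ j') (ha : ∀ k, a k ∈ Icc 1 m) (ha' : ∀ k, a' k ∈ Icc 1 m)
    (h : ceilBox V j a = ceilBox V j' a') : a = fun _ => m := by
  by_contra ha_ne
  have hlt := lt_ceilDiv_prod hmV ha ha_ne
  have hle := ceilBox_apply_le (V := V) hjj.symm ha'
  rw [← h, ceilBox, Fin.insertNth_apply_same] at hle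
  omega

theorem injOn_ceilBox (hmV : m ^ (e + 1) ≤ V) :
    Set.InjOn (fun p : Fin (e + 1) × (Fin e → ℕ) => ceilBox V p.1 p.2)
      {p | (∀ k, p.2 k ∈ Icc 1 m) ∧ (p.1 = 0 ∨ p.2 ≠ fun _ => m)} := by
  rintro ⟨j, a⟩ ⟨ha, hja⟩ ⟨j', a'⟩ ⟨ha', hja'⟩ h
  dsimp only at h ha ha' hja hja' ⊢
  by_cases hjj : j = j'
  · subst hjj
    exact Prod.ext rfl (Fin.insertNth_injective2 h).2
  · have hac := eq_const_of_ceilBox_eq hmV hjj ha ha' h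
    have hac' := eq_const_of_ceilBox_eq hmV (Ne.symm hjj) ha' ha h.symm
    grind

end CeilBox

theorem le_numMinBoxes {m e V : ℕ} (hm : 1 ≤ m) (hmV : m ^ (e + 1) ≤ V) :
    ((e + 1) * m ^ e - e : ℤ) ≤ numMinBoxes (e + 1) V := by
  set A : Finset (Fin e → ℕ) := Fintype.piFinset fun _ => Icc 1 m
  set B : Finset (Fin (e + 1) × (Fin e → ℕ)) := (univ.erase 0) ×ˢ {fun _ => m}
  -- the cube of side `m` is kept only as the box completed at position `0`
  set T := (univ ×ˢ A) \ B
  have hA : #A = m ^ e := by simp [A]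
  have hT : ((e + 1) * m ^ e - e : ℤ) ≤ #T := by
    have : #(univ ×ˢ A) - #B ≤ #T := le_card_sdiff _ _
    simp only [B, card_product, card_univ, Fintype.card_fin, card_erase_of_mem (mem_univ _),
      card_singleton, hA, add_tsub_cancel_right, mul_one] at this
    rw [show ((e : ℤ) + 1) * (m : ℤ) ^ e = (((e + 1) * m ^ e : ℕ) : ℤ) by push_cast; ring]
    omega
  have hT_sub : ↑T ⊆ {p : Fin (e + 1) × (Fin e → ℕ) |
      (∀ k, p.2 k ∈ Icc 1 m) ∧ (p.1 = 0 ∨ p.2 ≠ fun _ => m)} := by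
    intro p hp
    simp only [T, A, B, coe_sdiff, Set.mem_sdiff, mem_coe, mem_product, mem_univ, true_and,
      Fintype.mem_piFinset, mem_erase, and_true, mem_singleton, not_and] at hp
    exact ⟨hp.1, or_iff_not_imp_left.2 hp.2⟩
  have hTinj := (injOn_ceilBox (V := V) hmV).mono hT_sub
  have hTmin : ↑(T.image fun p => ceilBox V p.1 p.2) ⊆ {x | IsMinBox (e + 1) V x} := by
    rw [coe_image, Set.image_subset_iff]
    exact fun p hp => isMinBox_ceilBox hm hmV (hT_sub hp).1 p.1
  calc ((e + 1) * m ^ e - e : ℤ) ≤ #T := hT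
    _ = #(T.image fun p => ceilBox V p.1 p.2) := by rw [card_image_of_injOn hTinj]
    _ ≤ numMinBoxes (e + 1) V := by
      rw [← Set.ncard_coe_finset]
      exact_mod_cast Set.ncard_le_ncard hTmin (finite_setOf_isMinBox _ _)

theorem floor_rpow_one_div_pow_le {d : ℕ} (hd : d ≠ 0) (V : ℕ) :
    ⌊(V : ℝ) ^ ((1 : ℝ) / d)⌋₊ ^ d ≤ V := by
  have h := Nat.floor_le (Real.rpow_nonneg (Nat.cast_nonneg V) ((1 : ℝ) / d))
  suffices ((⌊(V : ℝ) ^ ((1 : ℝ) / d)⌋₊ : ℕ) : ℝ) ^ d ≤ V by exact_mod_cast this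
  calc _ ≤ ((V : ℝ) ^ ((1 : ℝ) / d)) ^ d := pow_le_pow_left₀ (Nat.cast_nonneg _) h d
    _ = V := by rw [one_div, Real.rpow_inv_natCast_pow (Nat.cast_nonneg V) hd]

theorem stmt8 (d V : ℕ) (hd : 2 ≤ d) (hV : 1 ≤ V) :
    (d : ℤ) * (⌊(V : ℝ) ^ ((1 : ℝ) / d)⌋₊ : ℤ) ^ (d - 1) - d + 1
      ≤ (numMinBoxes d V : ℤ) := by
  obtain ⟨e, rfl⟩ : ∃ e, d = e + 1 := ⟨d - 1, by omega⟩
  have hm : 1 ≤ ⌊(V : ℝ) ^ ((1 : ℝ) / (e + 1 : ℕ))⌋₊ :=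
    (Nat.one_le_floor_iff _).2 (Real.one_le_rpow (by exact_mod_cast hV) (by positivity))
  have h := le_numMinBoxes hm (floor_rpow_one_div_pow_le (Nat.succ_ne_zero e) V)
  simp only [Nat.add_sub_cancel]
  push_cast at h ⊢
  linarith
end

section
/- For every fixed d ≥ 2, f_d(V) = Θ(V^{(d-1)/d}) as V → ∞: there exist positive constants c, C (depending only on d) such that c·V^{(d-1)/d} ≤ f_d(V) ≤ C·V^{(d-1)/d} for all positive integers V. -/
lemma isMinBox_iff {d V : ℕ} (hV : 1 ≤ V) (x : Fin d → ℕ) :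
    IsMinBox d V x ↔ (∀ i, 1 ≤ x i) ∧ V ≤ ∏ i, x i ∧
      ∀ i, (x i - 1) * ∏ j, x j < V * x i := by
  constructor
  · rintro ⟨h1, h2, h3⟩
    refine ⟨h1, h2, fun i => ?_⟩
    rcases Nat.lt_or_ge (x i) 2 with hx | hx
    · have : x i = 1 := le_antisymm (by omega) (h1 i)
      rw [this]; simpa using (show 0 < V by omega)
    · set y := Function.update x i (x i - 1) with hy
      have hxy : ∏ j, y j < V := by
        refine h3 y (fun j => ?_) (fun j => ?_) ?_
        · rcases eq_or_ne j i with rfl | h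
          · simp [hy]; omega
          · simp [hy, Function.update_of_ne h]; exact h1 j
        · rcases eq_or_ne j i with rfl | h
          · simp [hy]
          · simp [hy, Function.update_of_ne h]
        · intro hcon
          have := congrFun hcon i
          simp [hy] at this
          omega
      have hprod : ∏ j, y j = (x i - 1) * ∏ j ∈ Finset.univ.erase i, x j := by
        rw [hy, Finset.prod_update_of_mem (Finset.mem_univ i), ← Finset.erase_eq]
      have hP : (∏ j ∈ Finset.univ.erase i, x j) * x i = ∏ j, x j :=
        Finset.prod_erase_mul _ _ (Finset.mem_univ i)
      calc (x i - 1) * ∏ j, x j = (x i - 1) * ((∏ j ∈ Finset.univ.erase i, x j) * x i) := by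
            rw [hP]
        _ = ((x i - 1) * ∏ j ∈ Finset.univ.erase i, x j) * x i := by ring
        _ < V * x i := by
            apply Nat.mul_lt_mul_of_lt_of_le (by rw [← hprod]; exact hxy) le_rfl
            omega
  · rintro ⟨h1, h2, h3⟩
    refine ⟨h1, h2, fun y hy1 hy2 hy3 => ?_⟩
    have : ∃ i, y i < x i := by
      by_contra hcon
      push_neg at hcon
      exact hy3 (funext fun i => le_antisymm (hy2 i) (hcon i))
    obtain ⟨i, hi⟩ := this
    have hP : (∏ j ∈ Finset.univ.erase i, x j) * x i = ∏ j, x j :=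
      Finset.prod_erase_mul _ _ (Finset.mem_univ i)
    have key : (x i - 1) * ∏ j ∈ Finset.univ.erase i, x j < V := by
      have h := h3 i
      rw [← hP] at h
      have hxi : 0 < x i := h1 i
      have : ((x i - 1) * ∏ j ∈ Finset.univ.erase i, x j) * x i < V * x i := by
        calc ((x i - 1) * ∏ j ∈ Finset.univ.erase i, x j) * x i
            = (x i - 1) * ((∏ j ∈ Finset.univ.erase i, x j) * x i) := by ring
          _ < V * x i := h
      exact Nat.lt_of_mul_lt_mul_right this
    calc ∏ j, y j ≤ ∏ j, Function.update x i (x i - 1) j := by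
          apply Finset.prod_le_prod (fun _ _ => Nat.zero_le _)
          intro j _
          rcases eq_or_ne j i with rfl | h
          · simp; omega
          · simp [Function.update_of_ne h]; exact hy2 j
      _ = (x i - 1) * ∏ j ∈ Finset.univ.erase i, x j := by
          rw [Finset.prod_update_of_mem (Finset.mem_univ i), ← Finset.erase_eq]
      _ < V := key

open Classical in
noncomputable def MB (d V : ℕ) : Finset (Fin d → ℕ) :=
  (Fintype.piFinset fun _ : Fin d => Finset.Icc 1 V).filter (IsMinBox d V)

lemma coord_le {d V : ℕ} (hV : 1 ≤ V) {x : Fin d → ℕ} (hx : IsMinBox d V x) (i : Fin d) :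
    x i ≤ V := by
  obtain ⟨h1, h2, h3⟩ := (isMinBox_iff hV x).1 hx
  have hle : x i ≤ ∏ j, x j := Finset.single_le_prod' (fun j _ => h1 j) (Finset.mem_univ i)
  by_contra hcon
  push_neg at hcon
  have hmul : V * x i ≤ (x i - 1) * ∏ j, x j := Nat.mul_le_mul (by omega) hle
  exact absurd (h3 i) (not_lt.2 hmul)

lemma mem_MB {d V : ℕ} (hV : 1 ≤ V) (x : Fin d → ℕ) :
    x ∈ MB d V ↔ IsMinBox d V x := by
  classical
  simp only [MB, Finset.mem_filter, Fintype.mem_piFinset, Finset.mem_Icc]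
  constructor
  · exact fun h => h.2
  · intro h
    exact ⟨fun i => ⟨h.1 i, coord_le hV h i⟩, h⟩

lemma numMinBoxes_eq {d V : ℕ} (hV : 1 ≤ V) :
    numMinBoxes d V = (MB d V).card := by
  rw [numMinBoxes]
  have e : {x : Fin d → ℕ // IsMinBox d V x} ≃ {x // x ∈ MB d V} :=
    Equiv.subtypeEquivRight (fun x => (mem_MB hV x).symm)
  rw [Nat.card_congr e, Nat.card_eq_fintype_card, Fintype.card_coe]

lemma ceilDiv_pos {V k : ℕ} (hV : 1 ≤ V) (hk : 1 ≤ k) : 1 ≤ V ⌈/⌉ k := by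
  have h := le_smul_ceilDiv (show 0 < k by omega) (b := V)
  simp only [smul_eq_mul] at h
  by_contra hcon
  push_neg at hcon
  interval_cases h' : (V ⌈/⌉ k) <;> omega

lemma removeNth_isMinBox {e V : ℕ} (hV : 1 ≤ V) {x : Fin (e + 1) → ℕ}
    (hx : IsMinBox (e + 1) V x) (i : Fin (e + 1)) :
    IsMinBox e (V ⌈/⌉ x i) (Fin.removeNth i x) := by
  obtain ⟨h1, h2, h3⟩ := (isMinBox_iff hV x).1 hx
  have hxi : 0 < x i := h1 i
  have hV' : 1 ≤ V ⌈/⌉ x i := ceilDiv_pos hV hxi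
  have hVle : V ≤ x i * (V ⌈/⌉ x i) := by
    have h := le_smul_ceilDiv hxi (b := V); simpa using h
  have hprod : ∏ j, x j = x i * ∏ j : Fin e, x (i.succAbove j) :=
    Fin.prod_univ_succAbove x i
  set Q := ∏ j : Fin e, x (i.succAbove j) with hQ
  rw [isMinBox_iff hV']
  refine ⟨fun j => h1 _, ?_, fun j => ?_⟩
  · show V ⌈/⌉ x i ≤ Q
    rw [ceilDiv_le_iff_le_smul hxi, smul_eq_mul, ← hprod]
    exact h2
  · show (x (i.succAbove j) - 1) * Q < (V ⌈/⌉ x i) * x (i.succAbove j)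
    have h := h3 (i.succAbove j)
    rw [hprod] at h
    have h' : x i * ((x (i.succAbove j) - 1) * Q) < x i * ((V ⌈/⌉ x i) * x (i.succAbove j)) := by
      calc x i * ((x (i.succAbove j) - 1) * Q) = (x (i.succAbove j) - 1) * (x i * Q) := by ring
        _ < V * x (i.succAbove j) := h
        _ ≤ (x i * (V ⌈/⌉ x i)) * x (i.succAbove j) := Nat.mul_le_mul_right _ hVle
        _ = x i * ((V ⌈/⌉ x i) * x (i.succAbove j)) := by ring
    exact Nat.lt_of_mul_lt_mul_left h'

lemma exists_min_coord {d V : ℕ} (hd : 1 ≤ d) (hV : 1 ≤ V) {x : Fin d → ℕ}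
    (hx : IsMinBox d V x) : ∃ i, (x i - 1) ^ d < V ∧ 1 ≤ x i ∧ x i ≤ V := by
  obtain ⟨h1, h2, h3⟩ := (isMinBox_iff hV x).1 hx
  have hne : (Finset.univ : Finset (Fin d)).Nonempty := by
    refine Finset.univ_nonempty_iff.2 ?_
    exact Fin.pos_iff_nonempty.1 (by omega)
  obtain ⟨i, _, hmin⟩ := Finset.exists_min_image Finset.univ x hne
  refine ⟨i, ?_, h1 i, coord_le hV hx i⟩
  obtain ⟨m, hm⟩ : ∃ m, x i = m + 1 := ⟨x i - 1, by have := h1 i; omega⟩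
  obtain ⟨d', hd'⟩ : ∃ d', d = d' + 1 := ⟨d - 1, by omega⟩
  have hpow : x i ^ d ≤ ∏ j, x j := by
    calc x i ^ d = ∏ _j : Fin d, x i := by simp
      _ ≤ ∏ j, x j := Finset.prod_le_prod (fun _ _ => Nat.zero_le _)
          (fun j _ => hmin j (Finset.mem_univ j))
  have key : (x i - 1) ^ d * x i < V * x i := by
    rw [hm]
    simp only [Nat.add_sub_cancel]
    calc m ^ d * (m + 1) ≤ (m * (m + 1) ^ d') * (m + 1) := by
          have h5 : m ^ d' ≤ (m + 1) ^ d' := Nat.pow_le_pow_left (Nat.le_succ m) d'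
          have h6 : m ^ d = m * m ^ d' := by rw [hd', pow_succ, mul_comm]
          rw [h6]
          exact Nat.mul_le_mul (Nat.mul_le_mul le_rfl h5) le_rfl
      _ = m * (m + 1) ^ d := by rw [hd', pow_succ]; ring
      _ ≤ m * ∏ j, x j := Nat.mul_le_mul_left m (by rw [← hm]; exact hpow)
      _ < V * (m + 1) := by have := h3 i; rw [hm] at this; simpa using this
  exact Nat.lt_of_mul_lt_mul_right key

set_option maxHeartbeats 1000000 in
lemma card_recursion {e V K : ℕ} (hV : 1 ≤ V)
    (hK : ∀ x ∈ MB (e + 1) V, ∃ i, x i ≤ K) :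
    (MB (e + 1) V).card ≤ (e + 1) * ∑ k ∈ Finset.Icc 1 K, (MB e (V ⌈/⌉ k)).card := by
  classical
  have hsub : MB (e + 1) V ⊆ (Finset.univ ×ˢ Finset.Icc 1 K).biUnion
      (fun p : Fin (e + 1) × ℕ => (MB e (V ⌈/⌉ p.2)).image (fun y : Fin e → ℕ => Fin.insertNth (α := fun _ => ℕ) p.1 p.2 y)) := by
    intro x hx
    have hmx := (mem_MB hV x).1 hx
    obtain ⟨i, hiK⟩ := hK x hx
    refine Finset.mem_biUnion.2 ⟨(i, x i), ?_, ?_⟩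
    · simp [Finset.mem_Icc, hmx.1 i, hiK]
    · refine Finset.mem_image.2 ⟨Fin.removeNth i x, ?_, ?_⟩
      · exact (mem_MB (ceilDiv_pos hV (hmx.1 i)) _).2 (removeNth_isMinBox hV hmx i)
      · exact Fin.insertNth_self_removeNth i x
  calc (MB (e + 1) V).card
      ≤ ((Finset.univ ×ˢ Finset.Icc 1 K).biUnion
        (fun p : Fin (e + 1) × ℕ => (MB e (V ⌈/⌉ p.2)).image (fun y : Fin e → ℕ => Fin.insertNth (α := fun _ => ℕ) p.1 p.2 y))).card :=
        Finset.card_le_card hsub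
    _ ≤ ∑ p ∈ Finset.univ ×ˢ Finset.Icc 1 K,
        ((MB e (V ⌈/⌉ p.2)).image (fun y : Fin e → ℕ => Fin.insertNth (α := fun _ => ℕ) p.1 p.2 y)).card :=
        Finset.card_biUnion_le
    _ ≤ ∑ p ∈ Finset.univ ×ˢ Finset.Icc 1 K, (MB e (V ⌈/⌉ p.2)).card :=
        Finset.sum_le_sum (fun p _ => Finset.card_image_le)
    _ = (e + 1) * ∑ k ∈ Finset.Icc 1 K, (MB e (V ⌈/⌉ k)).card := by
        rw [Finset.sum_product]
        simp [Finset.sum_const, Finset.card_univ]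

lemma numMinBoxes_one {V : ℕ} (hV : 1 ≤ V) : numMinBoxes 1 V = 1 := by
  rw [numMinBoxes_eq hV]
  have : MB 1 V = {fun _ => V} := by
    ext x
    rw [mem_MB hV, Finset.mem_singleton, isMinBox_iff hV]
    constructor
    · rintro ⟨h1, h2, h3⟩
      have hp : ∏ j, x j = x 0 := Fin.prod_univ_one x
      rw [hp] at h2
      have := h3 0
      rw [hp] at this
      have hx0 : x 0 = V := by
        by_contra hne
        have hlt : V ≤ x 0 - 1 := by omega
        have hmul : V * x 0 ≤ (x 0 - 1) * x 0 := Nat.mul_le_mul_right _ hlt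
        omega
      funext i
      have : i = 0 := Subsingleton.elim i 0
      rw [this, hx0]
    · rintro rfl
      refine ⟨fun _ => hV, by simp [Fin.prod_univ_one], fun i => ?_⟩
      simp only [Fin.prod_univ_one]
      have h0 : (0:ℕ) < V := hV
      exact mul_lt_mul_of_pos_right (by omega) h0
  rw [this, Finset.card_singleton]

lemma ceilDiv_lt {V Q c : ℕ} (hV : 1 ≤ V) (hQ : 1 ≤ Q) (hc : c = V ⌈/⌉ Q) :
    (c - 1) * Q < V := by
  rcases Nat.eq_zero_or_pos c with rfl | hcp
  · simpa using (show 0 < V by omega)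
  · by_contra hcon
    push_neg at hcon
    have : V ⌈/⌉ Q ≤ c - 1 := by
      rw [ceilDiv_le_iff_le_smul (show 0 < Q by omega), smul_eq_mul]
      calc V ≤ (c - 1) * Q := hcon
        _ = Q * (c - 1) := by ring
    omega

lemma lower_bound_card {e V n : ℕ} (hV : 1 ≤ V) (hn : 1 ≤ n)
    (hnd : n ^ (e + 1) ≤ V) : n ^ e ≤ numMinBoxes (e + 1) V := by
  classical
  rw [numMinBoxes_eq hV]
  set S : Finset (Fin e → ℕ) := Fintype.piFinset fun _ : Fin e => Finset.Icc 1 n with hS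
  have hcardS : S.card = n ^ e := by
    simp [hS, Fintype.card_piFinset]
  rw [← hcardS]
  apply Finset.card_le_card_of_injOn
      (fun z => Fin.snoc (α := fun _ => ℕ) z (V ⌈/⌉ ∏ j, z j))
  · intro z hz
    simp only [hS, Finset.mem_coe, Fintype.mem_piFinset, Finset.mem_Icc] at hz
    set Q := ∏ j, z j with hQdef
    have hQ1 : 1 ≤ Q := Finset.one_le_prod' (fun j _ => (hz j).1)
    have hQn : Q ≤ n ^ e := by
      calc Q ≤ ∏ _j : Fin e, n := Finset.prod_le_prod (fun _ _ => Nat.zero_le _)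
            (fun j _ => (hz j).2)
        _ = n ^ e := by simp
    set c := V ⌈/⌉ Q with hcdef
    have hc1 : 1 ≤ c := ceilDiv_pos hV hQ1
    have hVle : V ≤ Q * c := by
      have := le_smul_ceilDiv (show 0 < Q by omega) (b := V); simpa using this
    have hclt : (c - 1) * Q < V := ceilDiv_lt hV hQ1 hcdef
    -- c ≥ n
    have hcn : n ≤ c := by
      by_contra hcon
      push_neg at hcon
      have h1 : V ≤ Q * c := hVle
      have h2 : Q * c ≤ n ^ e * (n - 1) := by
        apply Nat.mul_le_mul hQn (by omega)
      have h3 : n ^ e * (n - 1) < n ^ (e + 1) := by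
        have hpe : (0:ℕ) < n ^ e := Nat.pow_pos (by omega)
        have : n ^ (e + 1) = n ^ e * n := by rw [pow_succ]
        rw [this]
        exact mul_lt_mul_of_pos_left (by omega) hpe
      omega
    set x : Fin (e + 1) → ℕ := Fin.snoc (α := fun _ => ℕ) z c with hxdef
    have hxcast : ∀ j : Fin e, x j.castSucc = z j := fun j => Fin.snoc_castSucc _ _ _
    have hxlast : x (Fin.last e) = c := Fin.snoc_last _ _
    have hprod : ∏ i, x i = Q * c := by
      rw [Fin.prod_univ_castSucc, hxlast]
      congr 1
      exact Finset.prod_congr rfl (fun j _ => hxcast j)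
    show x ∈ (MB (e + 1) V : Set (Fin (e + 1) → ℕ))
    rw [Finset.mem_coe, mem_MB hV, isMinBox_iff hV]
    refine ⟨?_, ?_, ?_⟩
    · intro i
      refine Fin.lastCases (motive := fun i => 1 ≤ x i) ?_ ?_ i
      · show 1 ≤ x (Fin.last e); rw [hxlast]; exact hc1
      · intro j; show 1 ≤ x j.castSucc; rw [hxcast j]; exact (hz j).1
    · rw [hprod]; exact hVle
    · intro i
      rw [hprod]
      refine Fin.lastCases (motive := fun i => (x i - 1) * (Q * c) < V * x i) ?_ ?_ i
      · -- last coordinate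
        show (x (Fin.last e) - 1) * (Q * c) < V * x (Fin.last e)
        rw [hxlast]
        calc (c - 1) * (Q * c) = ((c - 1) * Q) * c := by ring
          _ < V * c := mul_lt_mul_of_pos_right hclt (by omega)
      · intro j
        show (x j.castSucc - 1) * (Q * c) < V * x j.castSucc
        rw [hxcast j]
        set a := z j with hadef
        have ha1 : 1 ≤ a := (hz j).1
        have han : a ≤ n := (hz j).2
        set R := ∏ j' ∈ Finset.univ.erase j, z j' with hRdef
        have hQR : R * a = Q := Finset.prod_erase_mul _ _ (Finset.mem_univ j)
        have hac : a ≤ c := le_trans han hcn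
        -- (a - 1) * (Q * c) < V * a
        have key : (a - 1) * (R * c) < V := by
          have e1 : (a - 1) * (R * c) = Q * c - R * c := by
            rw [Nat.sub_mul, one_mul]
            congr 1
            rw [← hQR]; ring
          have e2 : Q ≤ R * c := by rw [← hQR]; exact Nat.mul_le_mul_left R hac
          have e3 : Q * c ≤ V - 1 + Q := by
            have : (c - 1) * Q ≤ V - 1 := by omega
            have h4 : Q * c = (c - 1) * Q + Q := by
              have h5 : (c - 1) * Q + Q = (c - 1 + 1) * Q := by ring
              rw [h5, show c - 1 + 1 = c from by omega, mul_comm]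
            omega
          omega
        calc (a - 1) * (Q * c) = ((a - 1) * (R * c)) * a := by rw [← hQR]; ring
          _ < V * a := mul_lt_mul_of_pos_right key (by omega)
  · intro z1 h1 z2 h2 heq
    have := congrArg (Fin.init (α := fun _ : Fin (e+1) => ℕ)) heq
    simpa [Fin.init_snoc] using this

open Real

lemma pow_diff_le {a b : ℝ} (e : ℕ) (ha : 0 ≤ a) (hab : a ≤ b) :
    b ^ e - a ^ e ≤ (b - a) * (e * b ^ (e - 1)) := by
  have hb : 0 ≤ b := le_trans ha hab
  have key : ∑ i ∈ Finset.range e, b ^ i * a ^ (e - 1 - i) ≤ e * b ^ (e - 1) := by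
    calc ∑ i ∈ Finset.range e, b ^ i * a ^ (e - 1 - i)
        ≤ ∑ i ∈ Finset.range e, b ^ (e - 1) := by
          apply Finset.sum_le_sum
          intro i hi
          simp only [Finset.mem_range] at hi
          calc b ^ i * a ^ (e - 1 - i) ≤ b ^ i * b ^ (e - 1 - i) := by
                apply mul_le_mul_of_nonneg_left (pow_le_pow_left₀ ha hab _) (pow_nonneg hb i)
            _ = b ^ (i + (e - 1 - i)) := by rw [pow_add]
            _ = b ^ (e - 1) := by congr 1; omega
      _ = e * b ^ (e - 1) := by rw [Finset.sum_const, Finset.card_range, nsmul_eq_mul]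
  calc b ^ e - a ^ e = (∑ i ∈ Finset.range e, b ^ i * a ^ (e - 1 - i)) * (b - a) :=
        (geom_sum₂_mul b a e).symm
    _ ≤ (e * b ^ (e - 1)) * (b - a) := mul_le_mul_of_nonneg_right key (by linarith)
    _ = (b - a) * (e * b ^ (e - 1)) := by ring

lemma rpow_pow_self {x : ℝ} (hx : 0 ≤ x) {e : ℕ} (he : 1 ≤ e) :
    (x ^ ((1:ℝ)/e)) ^ e = x := by
  rw [← Real.rpow_natCast (x ^ ((1:ℝ)/e)) e, ← Real.rpow_mul hx]
  rw [one_div, inv_mul_cancel₀ (by positivity), Real.rpow_one]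

lemma sum_rpow_bound {e : ℕ} (he : 1 ≤ e) (K : ℕ) :
    ∑ k ∈ Finset.Icc 1 K, ((k : ℝ)) ^ ((1:ℝ)/e - 1) ≤ e * (K : ℝ) ^ ((1:ℝ)/e) := by
  induction K with
  | zero => simp [Real.zero_rpow (by positivity : (1:ℝ)/e ≠ 0)]; positivity
  | succ K ih =>
    rw [Finset.sum_Icc_succ_top (by omega : 1 ≤ K + 1)]
    set a := (K : ℝ) ^ ((1:ℝ)/e) with hadef
    set b := ((K + 1 : ℕ) : ℝ) ^ ((1:ℝ)/e) with hbdef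
    have hKnn : (0:ℝ) ≤ (K:ℝ) := Nat.cast_nonneg K
    have ha : 0 ≤ a := Real.rpow_nonneg hKnn _
    have hb : 0 < b := Real.rpow_pos_of_pos (by positivity) _
    have hab : a ≤ b := by
      apply Real.rpow_le_rpow hKnn (by push_cast; linarith) (by positivity)
    have hae : a ^ e = K := rpow_pow_self hKnn he
    have hbe : b ^ e = (K + 1 : ℕ) := rpow_pow_self (Nat.cast_nonneg _) he
    have hkey : 1 ≤ (b - a) * (e * b ^ (e - 1)) := by
      have := pow_diff_le e ha hab
      rw [hae, hbe] at this
      push_cast at this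
      linarith
    have hterm : ((K + 1 : ℕ) : ℝ) ^ ((1:ℝ)/e - 1) ≤ e * (b - a) := by
      have hrw : ((K + 1 : ℕ) : ℝ) ^ ((1:ℝ)/e - 1) = b / (K + 1 : ℕ) := by
        rw [hbdef, Real.rpow_sub (by positivity), Real.rpow_one]
      rw [hrw, div_le_iff₀ (by positivity)]
      have hbb : ((K + 1 : ℕ) : ℝ) = b ^ e := hbe.symm
      rw [hbb]
      have hbpow : b ^ e = b ^ (e - 1) * b := by
        conv_lhs => rw [show e = (e - 1) + 1 from by omega]
        rw [pow_succ]
      calc b = 1 * b := (one_mul b).symm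
        _ ≤ ((b - a) * (e * b ^ (e - 1))) * b := by
            apply mul_le_mul_of_nonneg_right hkey hb.le
        _ = e * (b - a) * (b ^ (e - 1) * b) := by ring
        _ = e * (b - a) * b ^ e := by rw [← hbpow]
    push_cast
    push_cast at hterm ih
    linarith

lemma ceilDiv_le_real {V k : ℕ} (hk : 1 ≤ k) (hkV : k ≤ V) :
    ((V ⌈/⌉ k : ℕ) : ℝ) ≤ 2 * V / k := by
  have hnat : k * (V ⌈/⌉ k) ≤ 2 * V := by
    rw [Nat.ceilDiv_eq_add_pred_div]
    calc k * ((V + k - 1) / k) = ((V + k - 1) / k) * k := by ring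
      _ ≤ V + k - 1 := Nat.div_mul_le_self _ _
      _ ≤ 2 * V := by omega
  rw [le_div_iff₀ (by positivity : (0:ℝ) < (k:ℝ))]
  calc ((V ⌈/⌉ k : ℕ) : ℝ) * k = ((k * (V ⌈/⌉ k) : ℕ) : ℝ) := by push_cast; ring
    _ ≤ ((2 * V : ℕ) : ℝ) := by exact_mod_cast hnat
    _ = 2 * V := by push_cast; ring

lemma upper_bound : ∀ d : ℕ, 1 ≤ d → ∃ C : ℝ, 0 < C ∧ ∀ V : ℕ, 1 ≤ V →
    (numMinBoxes d V : ℝ) ≤ C * (V : ℝ) ^ (((d : ℝ) - 1) / d) := by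
  intro d hd
  induction d, hd using Nat.le_induction with
  | base =>
    refine ⟨1, one_pos, fun V hV => ?_⟩
    rw [numMinBoxes_one hV]
    norm_num
  | succ e he ih =>
    obtain ⟨Ce, hCe, hCeb⟩ := ih
    set s : ℝ := ((e : ℝ) - 1) / e with hsdef
    have hepos : (0:ℝ) < e := by exact_mod_cast he
    have hs0 : 0 ≤ s := by
      apply div_nonneg _ hepos.le
      have : (1:ℝ) ≤ e := by exact_mod_cast he
      linarith
    refine ⟨4 * e * (e + 1) * Ce, by positivity, fun V hV => ?_⟩
    have hVpos : (0:ℝ) < V := by exact_mod_cast hV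
    have hV1 : (1:ℝ) ≤ V := by exact_mod_cast hV
    set t : ℝ := (V : ℝ) ^ ((1:ℝ)/(e + 1)) with htdef
    have ht0 : 0 < t := Real.rpow_pos_of_pos hVpos _
    have ht1 : 1 ≤ t := Real.one_le_rpow hV1 (by positivity)
    have hte : t ^ (e + 1) = V := by
      have := rpow_pow_self hVpos.le (show 1 ≤ e + 1 by omega) (x := (V:ℝ))
      simpa [htdef] using this
    set K : ℕ := ⌊t⌋₊ + 1 with hKdef
    set K' : ℕ := min K V with hK'def
    have hKt : (K : ℝ) ≤ 2 * t := by
      have h1 : (⌊t⌋₊ : ℝ) ≤ t := Nat.floor_le ht0.le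
      push_cast [hKdef]
      linarith
    -- every min box has a coordinate ≤ K'
    have hKmin : ∀ x ∈ MB (e + 1) V, ∃ i, x i ≤ K' := by
      intro x hx
      obtain ⟨i, hpow, hx1, hxV⟩ := exists_min_coord (by omega) hV ((mem_MB hV x).1 hx)
      refine ⟨i, le_min ?_ hxV⟩
      have hreal : ((x i - 1 : ℕ) : ℝ) ≤ t := by
        by_contra hcon
        push_neg at hcon
        have : t ^ (e + 1) < ((x i - 1 : ℕ) : ℝ) ^ (e + 1) :=
          pow_lt_pow_left₀ hcon ht0.le (by omega)
        rw [hte] at this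
        have hcast : (((x i - 1) ^ (e + 1) : ℕ) : ℝ) < V := by exact_mod_cast hpow
        push_cast at hcast
        linarith
      have : x i - 1 ≤ ⌊t⌋₊ := Nat.le_floor hreal
      omega
    -- nat recursion
    have h1 : numMinBoxes (e + 1) V ≤ (e + 1) * ∑ k ∈ Finset.Icc 1 K',
        numMinBoxes e (V ⌈/⌉ k) := by
      rw [numMinBoxes_eq hV]
      calc (MB (e + 1) V).card ≤ (e + 1) * ∑ k ∈ Finset.Icc 1 K', (MB e (V ⌈/⌉ k)).card :=
            card_recursion hV hKmin
        _ = (e + 1) * ∑ k ∈ Finset.Icc 1 K', numMinBoxes e (V ⌈/⌉ k) := by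
            congr 1
            apply Finset.sum_congr rfl
            intro k hk
            simp only [Finset.mem_Icc] at hk
            rw [numMinBoxes_eq (ceilDiv_pos hV hk.1)]
    -- real bound per term
    have h2 : ∀ k ∈ Finset.Icc 1 K', (numMinBoxes e (V ⌈/⌉ k) : ℝ) ≤
        Ce * (2 * (V:ℝ)) ^ s * (k : ℝ) ^ ((1:ℝ)/e - 1) := by
      intro k hk
      simp only [Finset.mem_Icc] at hk
      have hk1 : 1 ≤ k := hk.1
      have hkV : k ≤ V := le_trans hk.2 (min_le_right _ _)
      have hkpos : (0:ℝ) < (k:ℝ) := by exact_mod_cast hk1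
      have hW := ceilDiv_pos hV hk1
      calc (numMinBoxes e (V ⌈/⌉ k) : ℝ) ≤ Ce * ((V ⌈/⌉ k : ℕ) : ℝ) ^ s := hCeb _ hW
        _ ≤ Ce * (2 * (V:ℝ) / k) ^ s := by
            apply mul_le_mul_of_nonneg_left _ hCe.le
            exact Real.rpow_le_rpow (by positivity) (ceilDiv_le_real hk1 hkV) hs0
        _ = Ce * (2 * (V:ℝ)) ^ s * (k : ℝ) ^ ((1:ℝ)/e - 1) := by
            rw [Real.div_rpow (by positivity) hkpos.le]
            rw [div_eq_mul_inv, ← Real.rpow_neg hkpos.le]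
            have : -s = (1:ℝ)/e - 1 := by
              rw [hsdef]; field_simp; ring
            rw [this, mul_assoc]
    -- sum bound
    have h3 : ∑ k ∈ Finset.Icc 1 K', ((k : ℝ)) ^ ((1:ℝ)/e - 1) ≤ 2 * e * t ^ ((1:ℝ)/e) := by
      calc ∑ k ∈ Finset.Icc 1 K', ((k : ℝ)) ^ ((1:ℝ)/e - 1)
          ≤ e * (K' : ℝ) ^ ((1:ℝ)/e) := sum_rpow_bound he K'
        _ ≤ e * (2 * t) ^ ((1:ℝ)/e) := by
            apply mul_le_mul_of_nonneg_left _ hepos.le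
            apply Real.rpow_le_rpow (Nat.cast_nonneg _) _ (by positivity)
            calc (K' : ℝ) ≤ (K : ℝ) := by exact_mod_cast min_le_left K V
              _ ≤ 2 * t := hKt
        _ = e * (2 ^ ((1:ℝ)/e) * t ^ ((1:ℝ)/e)) := by
            rw [Real.mul_rpow (by norm_num) ht0.le]
        _ ≤ e * (2 * t ^ ((1:ℝ)/e)) := by
            apply mul_le_mul_of_nonneg_left _ hepos.le
            apply mul_le_mul_of_nonneg_right _ (by positivity)
            calc (2:ℝ) ^ ((1:ℝ)/e) ≤ 2 ^ (1:ℝ) := by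
                  apply Real.rpow_le_rpow_of_exponent_le (by norm_num)
                  rw [div_le_one hepos]
                  exact_mod_cast he
              _ = 2 := Real.rpow_one 2
        _ = 2 * e * t ^ ((1:ℝ)/e) := by ring
    -- exponent arithmetic
    have hexp : (V:ℝ) ^ s * t ^ ((1:ℝ)/e) = (V:ℝ) ^ (((e:ℝ)) / (e + 1)) := by
      rw [htdef, ← Real.rpow_mul hVpos.le, ← Real.rpow_add hVpos]
      congr 1
      rw [hsdef]
      have he1 : (e:ℝ) ≠ 0 := ne_of_gt hepos
      have he2 : (e:ℝ) + 1 ≠ 0 := by positivity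
      field_simp
      ring
    have h6 : (2 * (V:ℝ)) ^ s ≤ 2 * (V:ℝ) ^ s := by
      rw [Real.mul_rpow (by norm_num) hVpos.le]
      apply mul_le_mul_of_nonneg_right _ (Real.rpow_nonneg hVpos.le s)
      calc (2:ℝ) ^ s ≤ 2 ^ (1:ℝ) := by
            apply Real.rpow_le_rpow_of_exponent_le (by norm_num)
            rw [hsdef, div_le_one hepos]
            linarith
        _ = 2 := Real.rpow_one 2
    have hsum_nonneg : (0:ℝ) ≤ ∑ k ∈ Finset.Icc 1 K', ((k : ℝ)) ^ ((1:ℝ)/e - 1) :=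
      Finset.sum_nonneg fun k _ => Real.rpow_nonneg (Nat.cast_nonneg k) _
    calc (numMinBoxes (e + 1) V : ℝ)
        ≤ ((e + 1 : ℕ) : ℝ) * ∑ k ∈ Finset.Icc 1 K', (numMinBoxes e (V ⌈/⌉ k) : ℝ) := by
          exact_mod_cast h1
      _ ≤ ((e + 1 : ℕ) : ℝ) * ∑ k ∈ Finset.Icc 1 K',
            (Ce * (2 * (V:ℝ)) ^ s * (k : ℝ) ^ ((1:ℝ)/e - 1)) := by
          apply mul_le_mul_of_nonneg_left (Finset.sum_le_sum h2) (by positivity)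
      _ = ((e + 1 : ℕ) : ℝ) * (Ce * (2 * (V:ℝ)) ^ s *
            ∑ k ∈ Finset.Icc 1 K', ((k : ℝ)) ^ ((1:ℝ)/e - 1)) := by
          congr 1
          rw [Finset.mul_sum]
      _ ≤ ((e + 1 : ℕ) : ℝ) * (Ce * (2 * (V:ℝ)) ^ s * (2 * e * t ^ ((1:ℝ)/e))) := by
          apply mul_le_mul_of_nonneg_left _ (by positivity)
          apply mul_le_mul_of_nonneg_left h3 (by positivity)
      _ ≤ ((e + 1 : ℕ) : ℝ) * (Ce * (2 * (V:ℝ) ^ s) * (2 * e * t ^ ((1:ℝ)/e))) := by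
          apply mul_le_mul_of_nonneg_left _ (by positivity)
          apply mul_le_mul_of_nonneg_right _ (by positivity)
          apply mul_le_mul_of_nonneg_left h6 hCe.le
      _ = 4 * e * (e + 1) * Ce * ((V:ℝ) ^ s * t ^ ((1:ℝ)/e)) := by push_cast; ring
      _ = 4 * e * (e + 1) * Ce * (V : ℝ) ^ (((e:ℝ)) / (e + 1)) := by rw [hexp]
      _ = 4 * e * (e + 1) * Ce * (V : ℝ) ^ ((((e + 1 : ℕ) : ℝ) - 1) / ((e + 1 : ℕ) : ℝ)) := by
          congr 2
          push_cast
          ring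

theorem stmt9 (d : ℕ) (hd : 2 ≤ d) :
    ∃ c C : ℝ, 0 < c ∧ 0 < C ∧ ∀ V : ℕ, 1 ≤ V →
      c * (V : ℝ) ^ (((d : ℝ) - 1) / d) ≤ (numMinBoxes d V : ℝ) ∧
      (numMinBoxes d V : ℝ) ≤ C * (V : ℝ) ^ (((d : ℝ) - 1) / d) := by
  obtain ⟨C, hC, hCb⟩ := upper_bound d (by omega)
  obtain ⟨e, rfl⟩ : ∃ e, d = e + 1 := ⟨d - 1, by omega⟩
  have he : 1 ≤ e := by omega
  refine ⟨(1/2 : ℝ) ^ e, C, by positivity, hC, fun V hV => ?_⟩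
  refine ⟨?_, hCb V hV⟩
  have hVpos : (0:ℝ) < V := by exact_mod_cast hV
  have hV1 : (1:ℝ) ≤ V := by exact_mod_cast hV
  set t : ℝ := (V : ℝ) ^ ((1:ℝ)/(e + 1)) with htdef
  have ht0 : 0 < t := Real.rpow_pos_of_pos hVpos _
  have ht1 : 1 ≤ t := Real.one_le_rpow hV1 (by positivity)
  have hte : t ^ (e + 1) = V := by
    have := rpow_pow_self hVpos.le (show 1 ≤ e + 1 by omega) (x := (V:ℝ))
    simpa [htdef] using this
  set n : ℕ := ⌊t⌋₊ with hndef
  have hn1 : 1 ≤ n := by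
    rw [hndef]
    exact Nat.le_floor (by exact_mod_cast ht1)
  have hnt : (n : ℝ) ≤ t := Nat.floor_le ht0.le
  have hnd : n ^ (e + 1) ≤ V := by
    have hreal : ((n : ℝ)) ^ (e + 1) ≤ (V : ℝ) := by
      calc ((n : ℝ)) ^ (e + 1) ≤ t ^ (e + 1) :=
            pow_le_pow_left₀ (Nat.cast_nonneg n) hnt _
        _ = V := hte
    exact_mod_cast hreal
  have hcard : n ^ e ≤ numMinBoxes (e + 1) V := lower_bound_card hV hn1 hnd
  have ht2n : t ≤ 2 * n := by
    have := Nat.lt_floor_add_one t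
    push_cast at this ⊢
    have : t < n + 1 := by rw [hndef]; exact_mod_cast Nat.lt_floor_add_one t
    have hn1r : (1:ℝ) ≤ n := by exact_mod_cast hn1
    linarith
  have hrpow : (V : ℝ) ^ ((((e + 1 : ℕ) : ℝ) - 1) / ((e + 1 : ℕ) : ℝ)) = t ^ e := by
    have h1 : ((((e + 1 : ℕ) : ℝ)) - 1) / ((e + 1 : ℕ) : ℝ) = (1 / ((e:ℝ) + 1)) * e := by
      push_cast
      field_simp
      ring
    rw [h1, Real.rpow_mul hVpos.le, Real.rpow_natCast]
  rw [hrpow]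
  calc (1/2 : ℝ) ^ e * t ^ e ≤ (1/2 : ℝ) ^ e * (2 * n) ^ e := by
        apply mul_le_mul_of_nonneg_left _ (by positivity)
        exact pow_le_pow_left₀ ht0.le ht2n e
    _ = (n : ℝ) ^ e := by
        rw [mul_pow, ← mul_assoc, ← mul_pow]
        norm_num
    _ ≤ (numMinBoxes (e + 1) V : ℝ) := by exact_mod_cast hcard
end

section
/- Let S be the set of d-dimensional boxes [x_0]×⋯×[x_{d-1}] with x_0,…,x_{d-2} ∈ [1, ⌊V^{1/d}⌋] and x_{d-1} = ⌈V / (x_0⋯x_{d-2})⌉. Then S is an antichain under inclusion: for any two distinct boxes A_0, A_1 ∈ S, neither is contained in the other. Consequently |S| = ⌊V^{1/d}⌋^{d-1} and every member of S has volume at least V. -/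
/-- Ceiling division of naturals: `⌈a / b⌉`. -/
def ceilDiv' (a b : ℕ) : ℕ := (a + b - 1) / b

lemma le_mul_ceilDiv' (a b : ℕ) (hb : 1 ≤ b) : a ≤ b * ceilDiv' a b := by
  unfold ceilDiv'
  have h1 := Nat.div_add_mod (a + b - 1) b
  have h2 := Nat.mod_lt (a + b - 1) (show 0 < b by omega)
  omega

lemma mul_ceilDiv'_lt (a b : ℕ) (hb : 1 ≤ b) : b * ceilDiv' a b < a + b := by
  unfold ceilDiv'
  have h1 := Nat.div_add_mod (a + b - 1) b
  omega

lemma ceil_key (V Px Py M : ℕ) (hPx : 1 ≤ Px) (hlt : Px < Py)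
    (h1 : Py ≤ M * (Py - Px)) (h2 : M * Px ≤ V) :
    ceilDiv' V Py < ceilDiv' V Px := by
  obtain ⟨k, hk, rfl⟩ : ∃ k, 1 ≤ k ∧ Py = Px + k := ⟨Py - Px, by omega, by omega⟩
  have hkey : Px * (Px + k) ≤ V * k := by
    have : Px + k ≤ M * k := by simpa using h1
    calc Px * (Px + k) ≤ Px * (M * k) := Nat.mul_le_mul_left _ this
      _ = (M * Px) * k := by ring
      _ ≤ V * k := Nat.mul_le_mul_right _ h2
  have hx := le_mul_ceilDiv' V Px hPx
  have hy := mul_ceilDiv'_lt V (Px + k) (by omega)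
  set cx := ceilDiv' V Px
  set cy := ceilDiv' V (Px + k)
  have : Px * ((Px + k) * cy) < Px * ((Px + k) * cx) := by nlinarith
  have := Nat.lt_of_mul_lt_mul_left this
  exact Nat.lt_of_mul_lt_mul_left this

lemma M_pos (d V : ℕ) (hV : 1 ≤ V) : 1 ≤ ⌊(V : ℝ) ^ ((1 : ℝ) / (d + 1))⌋₊ := by
  apply Nat.le_floor
  rw [Nat.cast_one]
  exact Real.one_le_rpow (by exact_mod_cast hV) (by positivity)

lemma M_pow (d V : ℕ) (hV : 1 ≤ V) :
    ⌊(V : ℝ) ^ ((1 : ℝ) / (d + 1))⌋₊ ^ (d + 1) ≤ V := by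
  set M := ⌊(V : ℝ) ^ ((1 : ℝ) / (d + 1))⌋₊
  have h1 : (M : ℝ) ≤ (V : ℝ) ^ ((1 : ℝ) / (d + 1)) := Nat.floor_le (by positivity)
  have h2 : ((M : ℝ)) ^ (d + 1) ≤ ((V : ℝ) ^ ((1 : ℝ) / (d + 1))) ^ (d + 1) :=
    pow_le_pow_left₀ (by positivity) h1 _
  have h3 : ((V : ℝ) ^ ((1 : ℝ) / (d + 1))) ^ (d + 1) = V := by
    rw [← Real.rpow_natCast ((V : ℝ) ^ ((1 : ℝ) / (d + 1))) (d + 1),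
      ← Real.rpow_mul (by positivity)]
    have : (1 : ℝ) / (d + 1) * ((d : ℕ) + 1 : ℕ) = 1 := by
      push_cast; field_simp
    rw [this, Real.rpow_one]
  rw [h3] at h2
  exact_mod_cast h2

/-- Membership in the family `S` of `(d+1)`-dimensional boxes: the first `d` sides are
arbitrary in `[1, ⌊V^{1/(d+1)}⌋]` and the last side is `⌈V / (product of the others)⌉`. -/
noncomputable def memS (d V : ℕ) (x : Fin (d + 1) → ℕ) : Prop :=
  (∀ i : Fin d, 1 ≤ x i.castSucc ∧ x i.castSucc ≤ ⌊(V : ℝ) ^ ((1 : ℝ) / (d + 1))⌋₊) ∧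
  x (Fin.last d) = ceilDiv' V (∏ i : Fin d, x i.castSucc)

lemma memS_mono (d V : ℕ) (hV : 1 ≤ V) (x y : Fin (d + 1) → ℕ)
    (hx : memS d V x) (hy : memS d V y) (hle : ∀ i, x i ≤ y i) : x = y := by
  set M := ⌊(V : ℝ) ^ ((1 : ℝ) / (d + 1))⌋₊ with hM
  have hM1 : 1 ≤ M := M_pos d V hV
  have hMp : M ^ (d + 1) ≤ V := M_pow d V hV
  have hall : ∀ i : Fin d, x i.castSucc = y i.castSucc := by
    intro i
    by_contra hne
    have hlt : x i.castSucc < y i.castSucc :=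
      lt_of_le_of_ne (hle i.castSucc) hne
    -- products
    set Px := ∏ j : Fin d, x j.castSucc with hPx
    set Py := ∏ j : Fin d, y j.castSucc with hPy
    set Q := ∏ j ∈ Finset.univ.erase i, y j.castSucc with hQ
    have hQsplit : Py = y i.castSucc * Q :=
      (Finset.mul_prod_erase Finset.univ _ (Finset.mem_univ i)).symm
    have hQ1 : 1 ≤ Q := Finset.one_le_prod' (fun j _ => (hy.1 j).1)
    have hPx1 : 1 ≤ Px := Finset.one_le_prod' (fun j _ => (hx.1 j).1)
    have hPxsplit : Px = x i.castSucc * ∏ j ∈ Finset.univ.erase i, x j.castSucc :=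
      (Finset.mul_prod_erase Finset.univ _ (Finset.mem_univ i)).symm
    have hQle : (∏ j ∈ Finset.univ.erase i, x j.castSucc) ≤ Q :=
      Finset.prod_le_prod' (fun j _ => hle j.castSucc)
    have hPxle : Px ≤ x i.castSucc * Q := by
      rw [hPxsplit]; exact Nat.mul_le_mul_left _ hQle
    have hPlt : Px < Py := by
      calc Px ≤ x i.castSucc * Q := hPxle
        _ < y i.castSucc * Q := (Nat.mul_lt_mul_right (show 0 < Q by omega)).mpr hlt
        _ = Py := hQsplit.symm
    have hgap : Px + Q ≤ Py := by
      calc Px + Q ≤ x i.castSucc * Q + Q := by omega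
        _ = (x i.castSucc + 1) * Q := by ring
        _ ≤ y i.castSucc * Q := Nat.mul_le_mul_right _ (by omega)
        _ = Py := hQsplit.symm
    have h1 : Py ≤ M * (Py - Px) := by
      calc Py = y i.castSucc * Q := hQsplit
        _ ≤ M * Q := Nat.mul_le_mul_right _ (hy.1 i).2
        _ ≤ M * (Py - Px) := Nat.mul_le_mul_left _ (by omega)
    have hPxM : Px ≤ M ^ d := by
      calc Px ≤ ∏ _j : Fin d, M := Finset.prod_le_prod' (fun j _ => (hx.1 j).2)
        _ = M ^ d := by simp
    have h2 : M * Px ≤ V := by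
      calc M * Px ≤ M * M ^ d := Nat.mul_le_mul_left _ hPxM
        _ = M ^ (d + 1) := by ring
        _ ≤ V := hMp
    have hceil := ceil_key V Px Py M hPx1 hPlt h1 h2
    have hlast : x (Fin.last d) ≤ y (Fin.last d) := hle _
    rw [hx.2, hy.2, ← hPx, ← hPy] at hlast
    omega
  funext j
  induction j using Fin.lastCases with
  | last =>
    rw [hx.2, hy.2]
    congr 1
    exact Finset.prod_congr rfl (fun i _ => hall i)
  | cast i => exact hall i

theorem stmt10 (d V : ℕ) (hd : 1 ≤ d) (hV : 1 ≤ V) :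
    (∀ x y : Fin (d + 1) → ℕ, memS d V x → memS d V y → x ≠ y →
      ¬ (∀ i, x i ≤ y i) ∧ ¬ (∀ i, y i ≤ x i)) ∧
    Nat.card {x : Fin (d + 1) → ℕ // memS d V x}
      = ⌊(V : ℝ) ^ ((1 : ℝ) / (d + 1))⌋₊ ^ d ∧
    (∀ x : Fin (d + 1) → ℕ, memS d V x → V ≤ ∏ i, x i) := by
  set M := ⌊(V : ℝ) ^ ((1 : ℝ) / (d + 1))⌋₊ with hM
  refine ⟨fun x y hx hy hne => ⟨fun h => hne (memS_mono d V hV x y hx hy h),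
    fun h => hne (memS_mono d V hV y x hy hx h).symm⟩, ?_, ?_⟩
  · -- cardinality
    have e : {x : Fin (d + 1) → ℕ // memS d V x} ≃ (Fin d → Fin M) :=
      { toFun := fun x i => ⟨x.1 i.castSucc - 1, by
          have h1 := (x.2.1 i).1
          have h2 := (x.2.1 i).2
          omega⟩
        invFun := fun g =>
          ⟨fun j => Fin.lastCases (ceilDiv' V (∏ i : Fin d, ((g i : ℕ) + 1)))
            (fun i => (g i : ℕ) + 1) j, by
            constructor
            · intro i
              simp only [Fin.lastCases_castSucc]
              have := (g i).2
              omega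
            · simp only [Fin.lastCases_last, Fin.lastCases_castSucc]⟩
        left_inv := by
          rintro ⟨x, hx⟩
          ext j
          induction j using Fin.lastCases with
          | last =>
            simp only [Fin.lastCases_last]
            rw [hx.2]
            congr 1
            refine Finset.prod_congr rfl (fun i _ => ?_)
            have := (hx.1 i).1
            omega
          | cast i =>
            simp only [Fin.lastCases_castSucc]
            have := (hx.1 i).1
            omega
        right_inv := by
          intro g
          funext i
          apply Fin.ext
          simp }
    rw [Nat.card_congr e, Nat.card_eq_fintype_card]
    simp
  · intro x hx
    have hPx1 : 1 ≤ ∏ i : Fin d, x i.castSucc :=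
      Finset.one_le_prod' (fun j _ => (hx.1 j).1)
    rw [Fin.prod_univ_castSucc, hx.2]
    exact le_mul_ceilDiv' V _ hPx1
end

section
/- Let q ≥ 2, d ≥ 2, and n be a positive integer, and suppose V is a positive integer such that q^V ≥ (q/(q-1)) · n^d · f_d(V), where f_d(V) is the number of minimal d-dimensional V-boxes. Then the number of arrays in Σ_q^{[n]^d} that contain no all-zero box of volume ≥ V is at least q^(n^d − 1). In particular, for V = d log_q(n) + ((d-1)/d) log_q(log_q n) + O(1) and n large enough, red(CA_{d,q}(n,V)) ≤ 1. -/
/-- `W` contains an all-zero box of side lengths `s` at position `u`. -/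
def zeroBoxAt (n d q : ℕ) (W : (Fin d → Fin n) → Fin q) (u s : Fin d → ℕ) : Prop :=
  (∀ i, 1 ≤ s i) ∧ (∀ i, u i + s i ≤ n) ∧
  ∀ x : Fin d → Fin n, (∀ i, u i ≤ (x i : ℕ) ∧ (x i : ℕ) < u i + s i) → (W x : ℕ) = 0

open Finset

lemma minbox_le (d V : ℕ) (hV : 1 ≤ V) {x : Fin d → ℕ} (hx : IsMinBox d V x) (i : Fin d) :
    x i ≤ V := by
  obtain ⟨h1, h2, h3⟩ := hx
  by_cases h : x i ≤ 1
  · omega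
  · push_neg at h
    have hy := h3 (Function.update x i (x i - 1)) ?_ ?_ ?_
    · have hle : x i - 1 ≤ ∏ j, Function.update x i (x i - 1) j := by
        have := Finset.single_le_prod' (f := Function.update x i (x i - 1)) (s := univ)
          (fun j _ => by
            rcases eq_or_ne j i with rfl | hj
            · simp; omega
            · simp [Function.update_of_ne hj]; exact h1 j) (mem_univ i)
        simpa using this
      omega
    · intro j
      rcases eq_or_ne j i with rfl | hj
      · simp; omega
      · simp [Function.update_of_ne hj]; exact h1 j
    · intro j
      rcases eq_or_ne j i with rfl | hj
      · simp
      · simp [Function.update_of_ne hj]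
    · intro hc
      have := congrFun hc i
      simp at this; omega

lemma exists_minbox (d V : ℕ) : ∀ N (s : Fin d → ℕ), ∏ i, s i ≤ N → (∀ i, 1 ≤ s i) →
    V ≤ ∏ i, s i → ∃ x, IsMinBox d V x ∧ ∀ i, x i ≤ s i := by
  intro N
  induction N with
  | zero =>
    intro s hN h1 _
    have : (1 : ℕ) ≤ ∏ i, s i := Finset.one_le_prod' (fun i _ => h1 i)
    omega
  | succ N ih =>
    intro s hN h1 h2
    by_cases hmin : ∀ y : Fin d → ℕ, (∀ i, 1 ≤ y i) → (∀ i, y i ≤ s i) → y ≠ s → ∏ i, y i < V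
    · exact ⟨s, ⟨h1, h2, hmin⟩, fun _ => le_rfl⟩
    · push_neg at hmin
      obtain ⟨y, hy1, hy2, hy3, hy4⟩ := hmin
      obtain ⟨i, hi⟩ := Function.ne_iff.mp hy3
      have hlt : ∏ i, y i < ∏ i, s i :=
        Finset.prod_lt_prod (fun i _ => hy1 i) (fun i _ => hy2 i)
          ⟨i, mem_univ i, lt_of_le_of_ne (hy2 i) hi⟩
      obtain ⟨x, hx, hxle⟩ := ih y (by omega) hy1 hy4
      exact ⟨x, hx, fun i => (hxle i).trans (hy2 i)⟩

lemma minbox_finite (d V : ℕ) (hV : 1 ≤ V) : Finite {x : Fin d → ℕ // IsMinBox d V x} := by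
  apply Finite.of_injective
    (fun x : {x : Fin d → ℕ // IsMinBox d V x} =>
      (fun i => (⟨x.1 i, Nat.lt_succ_of_le (minbox_le d V hV x.2 i)⟩ : Fin (V + 1))))
  intro a b h
  apply Subtype.ext
  funext i
  exact congrArg Fin.val (congrFun h i)

lemma zero_card (q n d V : ℕ) (hq : 1 ≤ q) (u : Fin d → Fin n) (x : Fin d → ℕ)
    (hx : IsMinBox d V x) :
    Nat.card {W : (Fin d → Fin n) → Fin q //
       zeroBoxAt n d q W (fun i => (u i : ℕ)) x} ≤ q ^ (n ^ d - V) := by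
  classical
  by_cases hfit : ∀ i, (u i : ℕ) + x i ≤ n
  · set P : (Fin d → Fin n) → Prop :=
      fun p => ∀ i, (u i : ℕ) ≤ (p i : ℕ) ∧ (p i : ℕ) < (u i : ℕ) + x i with hP
    have hPcard : V ≤ Fintype.card {p // P p} := by
      have hinj : Function.Injective (fun t : (∀ i, Fin (x i)) =>
          (⟨fun i => ⟨(u i : ℕ) + (t i : ℕ), by have := (t i).isLt; have := hfit i; omega⟩,
            fun i => ⟨by simp, by simp⟩⟩ : {p // P p})) := by
        intro t t' h
        funext i
        apply Fin.ext
        have h2 : ((u i : ℕ) + (t i : ℕ)) = (u i : ℕ) + (t' i : ℕ) :=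
          congrArg Fin.val (congrFun (congrArg Subtype.val h) i)
        omega
      calc V ≤ ∏ i, x i := hx.2.1
        _ = Fintype.card (∀ i, Fin (x i)) := by simp
        _ ≤ _ := Fintype.card_le_of_injective _ hinj
    have hinj2 : Function.Injective
        (fun (W : {W : (Fin d → Fin n) → Fin q //
            zeroBoxAt n d q W (fun i => (u i : ℕ)) x}) =>
          (fun p : {p // ¬ P p} => W.1 p.1)) := by
      intro W W' h
      apply Subtype.ext
      funext p
      by_cases hp : P p
      · apply Fin.ext
        have h1 := W.2.2.2 p hp
        have h2 := W'.2.2.2 p hp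
        omega
      · exact congrFun h ⟨p, hp⟩
    calc Nat.card {W : (Fin d → Fin n) → Fin q //
            zeroBoxAt n d q W (fun i => (u i : ℕ)) x}
        = Fintype.card {W : (Fin d → Fin n) → Fin q //
            zeroBoxAt n d q W (fun i => (u i : ℕ)) x} := Nat.card_eq_fintype_card
      _ ≤ Fintype.card ({p // ¬ P p} → Fin q) := Fintype.card_le_of_injective _ hinj2
      _ = q ^ (n ^ d - Fintype.card {p // P p}) := by
          rw [Fintype.card_fun, Fintype.card_fin, Fintype.card_subtype_compl]
          simp
      _ ≤ q ^ (n ^ d - V) :=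
          Nat.pow_le_pow_right hq (Nat.sub_le_sub_left hPcard _)
  · have : IsEmpty {W : (Fin d → Fin n) → Fin q //
        zeroBoxAt n d q W (fun i => (u i : ℕ)) x} := ⟨fun W => hfit W.2.2.1⟩
    simp [Nat.card_of_isEmpty]

theorem stmt11 (q n d V : ℕ) (hq : 2 ≤ q) (hn : 1 ≤ n) (hd : 2 ≤ d) (hV : 1 ≤ V)
    (hbound : ((q : ℝ) / ((q : ℝ) - 1)) * (n : ℝ) ^ d * (numMinBoxes d V : ℝ)
        ≤ (q : ℝ) ^ V) :
    q ^ (n ^ d - 1) ≤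
      Nat.card {W : (Fin d → Fin n) → Fin q //
        ∀ u s : Fin d → ℕ, V ≤ ∏ i, s i → ¬ zeroBoxAt n d q W u s} := by
  classical
  have hq1 : 1 ≤ q := by omega
  set p : ((Fin d → Fin n) → Fin q) → Prop :=
    fun W => ∀ u s : Fin d → ℕ, V ≤ ∏ i, s i → ¬ zeroBoxAt n d q W u s with hpdef
  have hΩcard : Fintype.card ((Fin d → Fin n) → Fin q) = q ^ (n ^ d) := by simp
  rcases le_or_gt V (n ^ d) with hVn | hVn
  · -- main case
    haveI : Finite {x : Fin d → ℕ // IsMinBox d V x} := minbox_finite d V hV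
    haveI : Fintype {x : Fin d → ℕ // IsMinBox d V x} := Fintype.ofFinite _
    have hMB : Fintype.card {x : Fin d → ℕ // IsMinBox d V x} = numMinBoxes d V := by
      rw [numMinBoxes, Nat.card_eq_fintype_card]
    have hgoal : Nat.card {W : (Fin d → Fin n) → Fin q // p W} = (univ.filter p).card := by
      rw [Nat.card_eq_fintype_card, Fintype.card_subtype]
    rw [hgoal]
    set bad : Finset ((Fin d → Fin n) → Fin q) := univ.filter (fun W => ¬ p W) with hbad
    have hsub : bad ⊆ (univ : Finset ((Fin d → Fin n) × {x : Fin d → ℕ // IsMinBox d V x})).biUnion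
        (fun a => univ.filter (fun W => zeroBoxAt n d q W (fun i => ((a.1 i : ℕ))) a.2.1)) := by
      intro W hW
      rw [hbad, mem_filter] at hW
      obtain ⟨-, hW⟩ := hW
      simp only [hpdef] at hW
      push_neg at hW
      obtain ⟨u, s, hs, hz⟩ := hW
      obtain ⟨x, hxmin, hxle⟩ := exists_minbox d V (∏ i, s i) s le_rfl hz.1 hs
      have hun : ∀ i, u i < n := fun i => by
        have := hz.2.1 i; have := hz.1 i; omega
      refine Finset.mem_biUnion.mpr ⟨⟨fun i => ⟨u i, hun i⟩, ⟨x, hxmin⟩⟩, mem_univ _,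
        mem_filter.mpr ⟨mem_univ _, ?_⟩⟩
      refine ⟨hxmin.1, fun i => ?_, fun pt hpt => ?_⟩
      · show u i + x i ≤ n
        have := hz.2.1 i
        have := hxle i
        omega
      · refine hz.2.2 pt (fun i => ⟨(hpt i).1, ?_⟩)
        have h2 : (pt i : ℕ) < u i + x i := (hpt i).2
        have := hxle i
        show (pt i : ℕ) < u i + s i
        omega
    have hbadcard : bad.card ≤ n ^ d * numMinBoxes d V * q ^ (n ^ d - V) := by
      calc bad.card
          ≤ ((univ : Finset ((Fin d → Fin n) × {x : Fin d → ℕ // IsMinBox d V x})).biUnion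
              (fun a => univ.filter
                (fun W => zeroBoxAt n d q W (fun i => ((a.1 i : ℕ))) a.2.1))).card :=
            Finset.card_le_card hsub
        _ ≤ ∑ a : (Fin d → Fin n) × {x : Fin d → ℕ // IsMinBox d V x},
              (univ.filter
                (fun W => zeroBoxAt n d q W (fun i => ((a.1 i : ℕ))) a.2.1)).card :=
            Finset.card_biUnion_le
        _ ≤ ∑ _a : (Fin d → Fin n) × {x : Fin d → ℕ // IsMinBox d V x}, q ^ (n ^ d - V) := by
            refine Finset.sum_le_sum (fun a _ => ?_)
            have h := zero_card q n d V hq1 a.1 a.2.1 a.2.2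
            rwa [Nat.card_eq_fintype_card, Fintype.card_subtype] at h
        _ = n ^ d * numMinBoxes d V * q ^ (n ^ d - V) := by
            rw [Finset.sum_const, smul_eq_mul, Finset.card_univ, Fintype.card_prod,
              Fintype.card_fun, Fintype.card_fin, Fintype.card_fin, hMB]
    have hposR : (0 : ℝ) < (q : ℝ) - 1 := by
      have : (2 : ℝ) ≤ (q : ℝ) := by exact_mod_cast hq
      linarith
    have hR : (q : ℝ) * ((n : ℝ) ^ d * (numMinBoxes d V : ℝ)) ≤ ((q : ℝ) - 1) * (q : ℝ) ^ V := by
      have h1 := mul_le_mul_of_nonneg_left hbound hposR.le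
      have h2 : ((q : ℝ) - 1) * (((q : ℝ) / ((q : ℝ) - 1)) * (n : ℝ) ^ d * (numMinBoxes d V : ℝ))
          = (q : ℝ) * ((n : ℝ) ^ d * (numMinBoxes d V : ℝ)) := by
        field_simp
      linarith
    have hkey : q * (n ^ d * numMinBoxes d V) ≤ (q - 1) * q ^ V := by
      have hcast : ((q - 1 : ℕ) : ℝ) = (q : ℝ) - 1 := by
        push_cast [Nat.cast_sub hq1]
        ring
      rw [← hcast] at hR
      exact_mod_cast hR
    have hsplit : (univ.filter p).card + bad.card = q ^ (n ^ d) := by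
      rw [hbad, Finset.card_filter_add_card_filter_not, Finset.card_univ, hΩcard]
    have e1 : q ^ (n ^ d - 1) * q = q ^ (n ^ d) := by
      rw [← pow_succ]
      congr 1
      have : 1 ≤ n ^ d := Nat.one_le_pow _ _ (by omega)
      omega
    have e2 : q ^ V * q ^ (n ^ d - V) = q ^ (n ^ d) := by
      rw [← pow_add]
      congr 1
      omega
    have hb : bad.card * q ≤ (q - 1) * q ^ (n ^ d) := by
      calc bad.card * q ≤ (n ^ d * numMinBoxes d V * q ^ (n ^ d - V)) * q :=
            Nat.mul_le_mul_right _ hbadcard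
        _ = (q * (n ^ d * numMinBoxes d V)) * q ^ (n ^ d - V) := by ring
        _ ≤ ((q - 1) * q ^ V) * q ^ (n ^ d - V) := Nat.mul_le_mul_right _ hkey
        _ = (q - 1) * q ^ (n ^ d) := by rw [mul_assoc, e2]
    have hq2 : q ^ (n ^ d) * q = (q - 1) * q ^ (n ^ d) + q ^ (n ^ d) := by
      have hq' : q - 1 + 1 = q := by omega
      calc q ^ (n ^ d) * q = q ^ (n ^ d) * (q - 1 + 1) := by rw [hq']
        _ = (q - 1) * q ^ (n ^ d) + q ^ (n ^ d) := by ring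
    have hG : (univ.filter p).card = q ^ (n ^ d) - bad.card := by omega
    have hfinal : q ^ (n ^ d - 1) * q ≤ (univ.filter p).card * q := by
      rw [hG, Nat.sub_mul, e1]
      apply Nat.le_sub_of_add_le
      linarith
    exact Nat.le_of_mul_le_mul_right hfinal (by omega)
  · -- trivial case: no big box fits
    have hall : ∀ W : (Fin d → Fin n) → Fin q, p W := by
      intro W u s hs hz
      have h1 := hz.1
      have h2 := hz.2.1
      have hle : ∏ i, s i ≤ ∏ _i : Fin d, n :=
        Finset.prod_le_prod' (fun i _ => by have := h1 i; have := h2 i; omega)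
      simp at hle
      omega
    have : Nat.card {W : (Fin d → Fin n) → Fin q // p W}
        = Nat.card ((Fin d → Fin n) → Fin q) :=
      Nat.card_congr (Equiv.subtypeUnivEquiv hall)
    rw [this, Nat.card_eq_fintype_card, hΩcard]
    exact Nat.pow_le_pow_right hq1 (Nat.sub_le _ _)
end

section
/- (Lovász Local Lemma, asymmetric form.) Let Y_0,…,Y_{m-1} be events in a probability space and let G = ([m], E) be a graph such that each Y_i is mutually independent of the collection {Y_j : (i,j) ∉ E, j ≠ i}. Suppose there exist reals α_0,…,α_{m-1} ∈ [0,1) such that Pr(Y_i) ≤ α_i · ∏_{(i,j)∈E} (1 − α_j) for all i. Then Pr(⋂_{i∈[m]} ¬Y_i) ≥ ∏_{i∈[m]} (1 − α_i) > 0. -/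
/-!
Write `A_S = ⋂_{j ∈ S} Y_jᶜ` for the event that none of the `Y_j`, `j ∈ S`, occurs. The heart
of the argument is the conditional bound `Pr(Y_i ∩ A_S) ≤ α_i · Pr(A_S)` for `i ∉ S`, proved by
strong induction on `S`. Split `S` into the neighbours `S₁` and the non-neighbours `S₂` of `i`.
Dropping `S₁` and using independence of `Y_i` from `A_{S₂}`,
`Pr(Y_i ∩ A_S) ≤ Pr(Y_i) Pr(A_{S₂}) ≤ α_i ∏_{j ∈ S₁} (1 - α_j) · Pr(A_{S₂})`,
and adding the events of `S₁` one at a time, each time applying the induction hypothesis to a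
proper subset of `S`, gives `∏_{j ∈ S₁} (1 - α_j) · Pr(A_{S₂}) ≤ Pr(A_S)`. The same chaining
with `S₂ = ∅` and `S₁` the whole index set yields `∏_i (1 - α_i) ≤ Pr(A_univ)`.
-/

open MeasureTheory ProbabilityTheory

namespace LovaszLocalLemma

variable {Ω ι : Type*} [MeasurableSpace Ω] {μ : Measure Ω} [DecidableEq ι] {Y : ι → Set Ω}

lemma one_sub_mul_measureReal_le_insert [IsFiniteMeasure μ] {i : ι} {S : Finset ι} {a : ℝ}
    (hYi : MeasurableSet (Y i))
    (h : μ.real (Y i ∩ ⋂ j ∈ S, (Y j)ᶜ) ≤ a * μ.real (⋂ j ∈ S, (Y j)ᶜ)) :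
    (1 - a) * μ.real (⋂ j ∈ S, (Y j)ᶜ) ≤ μ.real (⋂ j ∈ insert i S, (Y j)ᶜ) := by
  have hsplit := measureReal_inter_add_sdiff (μ := μ) (s := ⋂ j ∈ S, (Y j)ᶜ) hYi
  rw [Finset.set_biInter_insert, ← Set.sdiff_eq_compl_inter]
  rw [Set.inter_comm] at hsplit
  linarith

lemma prod_one_sub_mul_measureReal_le [IsFiniteMeasure μ] {α : ι → ℝ} {T B : Finset ι}
    (hY : ∀ j, MeasurableSet (Y j)) (hα : ∀ j ∈ T, α j ≤ 1) (hTB : Disjoint T B)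
    (h : ∀ j ∈ T, ∀ U ⊆ T ∪ B, j ∉ U →
      μ.real (Y j ∩ ⋂ k ∈ U, (Y k)ᶜ) ≤ α j * μ.real (⋂ k ∈ U, (Y k)ᶜ)) :
    (∏ j ∈ T, (1 - α j)) * μ.real (⋂ j ∈ B, (Y j)ᶜ) ≤ μ.real (⋂ j ∈ T ∪ B, (Y j)ᶜ) := by
  induction T using Finset.induction_on with
  | empty => simp
  | @insert j T hjT ih =>
    have hjB : j ∉ B := Finset.disjoint_left.mp hTB (Finset.mem_insert_self j T)
    have hTB' : Disjoint T B := Finset.disjoint_of_subset_left (Finset.subset_insert j T) hTB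
    have hsub : T ∪ B ⊆ insert j T ∪ B := Finset.union_subset_union_left (Finset.subset_insert j T)
    have ih' := ih (fun k hk => hα k (Finset.mem_insert_of_mem hk)) hTB'
      (fun k hk U hU => h k (Finset.mem_insert_of_mem hk) U (hU.trans hsub))
    have hstep := one_sub_mul_measureReal_le_insert (hY j)
      (h j (Finset.mem_insert_self j T) (T ∪ B) hsub (by simp [hjT, hjB]))
    rw [Finset.prod_insert hjT, Finset.insert_union, mul_assoc]
    exact (mul_le_mul_of_nonneg_left ih' (sub_nonneg.2 (hα j (Finset.mem_insert_self j T)))).trans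
      hstep

lemma measureReal_inter_biInter_compl_le [IsFiniteMeasure μ] [Fintype ι]
    (hY : ∀ i, MeasurableSet (Y i)) (G : SimpleGraph ι) [DecidableRel G.Adj]
    (hindep : ∀ i : ι,
      Indep (MeasurableSpace.generateFrom {Y i})
        (MeasurableSpace.generateFrom {s | ∃ j : ι, j ≠ i ∧ ¬ G.Adj i j ∧ s = Y j}) μ)
    {α : ι → ℝ} (hα₀ : ∀ i, 0 ≤ α i) (hα₁ : ∀ i, α i ≤ 1)
    (hPr : ∀ i, μ.real (Y i) ≤ α i * ∏ j ∈ Finset.univ.filter (fun j => G.Adj i j), (1 - α j))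
    (S : Finset ι) {i : ι} (hi : i ∉ S) :
    μ.real (Y i ∩ ⋂ j ∈ S, (Y j)ᶜ) ≤ α i * μ.real (⋂ j ∈ S, (Y j)ᶜ) := by
  induction S using Finset.strongInduction generalizing i with
  | H S ih =>
  set S₁ := S.filter (fun j => G.Adj i j)
  set S₂ := S.filter (fun j => ¬ G.Adj i j)
  have hS : S₁ ∪ S₂ = S := Finset.filter_union_filter_not_eq _ S
  have hA₂ : MeasurableSet[MeasurableSpace.generateFrom
      {s | ∃ j : ι, j ≠ i ∧ ¬ G.Adj i j ∧ s = Y j}] (⋂ j ∈ S₂, (Y j)ᶜ) := by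
    refine Finset.measurableSet_biInter S₂ fun j hj => .compl ?_
    obtain ⟨hjS, hij⟩ := Finset.mem_filter.mp hj
    exact MeasurableSpace.measurableSet_generateFrom ⟨j, by rintro rfl; exact hi hjS, hij, rfl⟩
  have hindep_i : μ.real (Y i ∩ ⋂ j ∈ S₂, (Y j)ᶜ) = μ.real (Y i) * μ.real (⋂ j ∈ S₂, (Y j)ᶜ) := by
    simp only [Measure.real, (Indep_iff _ _ μ).mp (hindep i) _ _
      (MeasurableSpace.measurableSet_generateFrom rfl) hA₂, ENNReal.toReal_mul]
  have hnbr : ∏ j ∈ Finset.univ.filter (fun j => G.Adj i j), (1 - α j) ≤ ∏ j ∈ S₁, (1 - α j) :=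
    Finset.prod_le_prod_of_subset_of_le_one (Finset.monotone_filter_left _ (Finset.subset_univ S))
      (fun j _ => sub_nonneg.2 (hα₁ j)) (fun j _ _ => sub_le_self _ (hα₀ j))
  have hchain : (∏ j ∈ S₁, (1 - α j)) * μ.real (⋂ j ∈ S₂, (Y j)ᶜ) ≤ μ.real (⋂ j ∈ S, (Y j)ᶜ) := by
    rw [← hS]
    refine prod_one_sub_mul_measureReal_le hY (fun j _ => hα₁ j)
      (Finset.disjoint_filter_filter_not _ _ _) fun j hj U hU hjU => ih U ?_ hjU
    rw [hS] at hU
    exact (Finset.ssubset_iff_of_subset hU).2 ⟨j, Finset.filter_subset _ S hj, hjU⟩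
  calc μ.real (Y i ∩ ⋂ j ∈ S, (Y j)ᶜ)
      ≤ μ.real (Y i ∩ ⋂ j ∈ S₂, (Y j)ᶜ) :=
        measureReal_mono (Set.inter_subset_inter_right _
          (Set.biInter_subset_biInter_left (Finset.coe_subset.2 (Finset.filter_subset _ S))))
    _ = μ.real (Y i) * μ.real (⋂ j ∈ S₂, (Y j)ᶜ) := hindep_i
    _ ≤ α i * (∏ j ∈ S₁, (1 - α j)) * μ.real (⋂ j ∈ S₂, (Y j)ᶜ) := by
        gcongr
        exact (hPr i).trans (mul_le_mul_of_nonneg_left hnbr (hα₀ i))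
    _ ≤ α i * μ.real (⋂ j ∈ S, (Y j)ᶜ) := by
        rw [mul_assoc]
        exact mul_le_mul_of_nonneg_left hchain (hα₀ i)

end LovaszLocalLemma

/-- The asymmetric Lovász Local Lemma.  Each event `Y i` is mutually independent of
the family of events `Y j` over non-neighbors `j` of `i` in the graph `G` (expressed
as independence of the generated σ-algebras, i.e. of all Boolean combinations). -/
theorem stmt14 {Ω : Type*} [MeasurableSpace Ω] (μ : Measure Ω)
    [IsProbabilityMeasure μ] (m : ℕ) (Y : Fin m → Set Ω)
    (hY : ∀ i, MeasurableSet (Y i)) (G : SimpleGraph (Fin m)) [DecidableRel G.Adj]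
    (hindep : ∀ i : Fin m,
      Indep (MeasurableSpace.generateFrom {Y i})
        (MeasurableSpace.generateFrom {s | ∃ j : Fin m, j ≠ i ∧ ¬ G.Adj i j ∧ s = Y j}) μ)
    (α : Fin m → ℝ) (hα : ∀ i, 0 ≤ α i ∧ α i < 1)
    (hPr : ∀ i, (μ (Y i)).toReal ≤
        α i * ∏ j ∈ Finset.univ.filter (fun j => G.Adj i j), (1 - α j)) :
    ∏ i, (1 - α i) ≤ (μ (⋂ i, (Y i)ᶜ)).toReal ∧ 0 < ∏ i, (1 - α i) := by
  have hα₁ : ∀ i, α i ≤ 1 := fun i => (hα i).2.le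
  have hchain := LovaszLocalLemma.prod_one_sub_mul_measureReal_le (μ := μ) (B := ∅) hY
    (fun j _ => hα₁ j) (Finset.disjoint_empty_right Finset.univ)
    fun j _ U _ hjU => LovaszLocalLemma.measureReal_inter_biInter_compl_le hY G hindep
      (fun i => (hα i).1) hα₁ hPr U hjU
  refine ⟨?_, Finset.prod_pos fun i _ => sub_pos.2 (hα i).2⟩
  simpa [Measure.real] using hchain
end

section
/- There exists a constant C_2 > 0 (depending on q) such that for all positive integers n and L with 2L ≤ n, the redundancy of the set of zero L-squares free n×n arrays over Σ_q satisfies red(C_{2,q}(n,L)) ≥ C_2 · (n − 2L)² / q^{L²}. One may take C_2 = log_q(e)·(q−1)⁴ / (4q⁴). -/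
/-- The `n × n` array `W` contains an all-zero `L × L` subsquare at position `(u, v)`. -/
def zeroSquareAt (n L q : ℕ) (W : Fin n → Fin n → Fin q) (u v : ℕ) : Prop :=
  u + L ≤ n ∧ v + L ≤ n ∧
  ∀ a b : Fin n,
    (u ≤ (a : ℕ) ∧ (a : ℕ) < u + L ∧ v ≤ (b : ℕ) ∧ (b : ℕ) < v + L) → (W a b : ℕ) = 0

def rp (L u v a b : ℕ) : Prop := u ≤ a ∧ a < u + L ∧ v ≤ b ∧ b < v + L
def fp (L u v a b : ℕ) : Prop :=
  (a = u + L ∧ b = v) ∨ (a = u + L ∧ b = v + L - 1) ∨ (a = u ∧ b = v + L)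
instance (L u v a b : ℕ) : Decidable (rp L u v a b) := by unfold rp; infer_instance
instance (L u v a b : ℕ) : Decidable (fp L u v a b) := by unfold fp; infer_instance

def Pc (q L u v : ℕ) (a b : Fin (2*L)) (x : Fin q) : Prop :=
  (rp L u v a b → (x : ℕ) = 0) ∧ (fp L u v a b → (x : ℕ) ≠ 0)

instance (q L u v : ℕ) (a b : Fin (2*L)) (x : Fin q) : Decidable (Pc q L u v a b x) := by
  unfold Pc; infer_instance

lemma card_doublePi {N q : ℕ} (P : Fin N → Fin N → Fin q → Prop) :
    Nat.card {W : Fin N → Fin N → Fin q // ∀ a b, P a b (W a b)} =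
      ∏ a : Fin N, ∏ b : Fin N, Nat.card {x : Fin q // P a b x} := by
  have e1 : {W : Fin N → Fin N → Fin q // ∀ a b, P a b (W a b)} ≃
      ∀ a : Fin N, {g : Fin N → Fin q // ∀ b, P a b (g b)} :=
    Equiv.subtypePiEquivPi (β := fun _ : Fin N => Fin N → Fin q)
      (p := fun a g => ∀ b, P a b (g b))
  rw [Nat.card_congr e1, Nat.card_pi]
  refine Finset.prod_congr rfl fun a _ => ?_
  rw [Nat.card_congr (Equiv.subtypePiEquivPi (β := fun _ : Fin N => Fin q)
    (p := fun b x => P a b x)), Nat.card_pi]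

lemma cell_card (q L u v : ℕ) (hq : 2 ≤ q) (a b : Fin (2*L)) :
    Nat.card {x : Fin q // Pc q L u v a b x} =
      if rp L u v a b then 1 else if fp L u v a b then q - 1 else q := by
  haveI : NeZero q := ⟨by omega⟩
  by_cases hr : rp L u v a b
  · have hf : ¬ fp L u v a b := by
      obtain ⟨h1, h2, h3, h4⟩ := hr
      rintro (⟨e1, e2⟩ | ⟨e1, e2⟩ | ⟨e1, e2⟩) <;> omega
    simp only [hr, hf, if_pos, if_neg]
    rw [Nat.card_congr (Equiv.subtypeEquivRight (q := fun x : Fin q => x = 0)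
      (fun x => by simp [Pc, hr, hf]))]
    simp
  · by_cases hf : fp L u v a b
    · simp only [hr, hf, if_neg, if_pos]
      rw [Nat.card_congr (Equiv.subtypeEquivRight (q := fun x : Fin q => ¬ (x = 0))
        (fun x => by simp [Pc, hr, hf])), Nat.card_eq_fintype_card,
        Fintype.card_subtype_compl]
      simp
    · simp only [hr, hf, if_neg]
      rw [Nat.card_congr (Equiv.subtypeUnivEquiv (fun x => by simp [Pc, hr, hf]))]
      simp

lemma Dcard (q L u v : ℕ) (hq : 2 ≤ q) (hL : 1 ≤ L) (hu : u < L) (hv : v < L) :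
    (q - 1) ^ 4 * q ^ (3 * L ^ 2) ≤
      Nat.card {W : Fin (2*L) → Fin (2*L) → Fin q // ∀ a b, Pc q L u v a b (W a b)} * q ^ 4 := by
  rw [card_doublePi]
  have hrw : ∀ a b : Fin (2*L), Nat.card {x : Fin q // Pc q L u v a b x} =
      if rp L u v a b then 1 else if fp L u v a b then q - 1 else q :=
    cell_card q L u v hq
  simp only [hrw]
  rw [← Fintype.prod_prod_type']
  rw [Finset.prod_ite (f := fun _ => 1), Finset.prod_ite (f := fun _ => q - 1)]
  simp only [Finset.prod_const, one_pow, one_mul]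
  set c1 := (Finset.filter (fun x : Fin (2*L) × Fin (2*L) => fp L u v ↑x.1 ↑x.2)
      (Finset.filter (fun x : Fin (2*L) × Fin (2*L) => ¬rp L u v ↑x.1 ↑x.2) Finset.univ)).card
    with hc1d
  set c2 := (Finset.filter (fun x : Fin (2*L) × Fin (2*L) => ¬fp L u v ↑x.1 ↑x.2)
      (Finset.filter (fun x : Fin (2*L) × Fin (2*L) => ¬rp L u v ↑x.1 ↑x.2) Finset.univ)).card
    with hc2d
  have hA : u + L < 2 * L := by omega
  have hB : v < 2 * L := by omega
  have hB2 : v + L - 1 < 2 * L := by omega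
  have hC : u < 2 * L := by omega
  have hC2 : v + L < 2 * L := by omega
  have hc1 : c1 ≤ 3 := by
    have hsub : (Finset.filter (fun x : Fin (2*L) × Fin (2*L) => fp L u v ↑x.1 ↑x.2)
        (Finset.filter (fun x : Fin (2*L) × Fin (2*L) => ¬rp L u v ↑x.1 ↑x.2) Finset.univ)) ⊆
        {((⟨u+L, hA⟩ : Fin (2*L)), (⟨v, hB⟩ : Fin (2*L))),
         ((⟨u+L, hA⟩ : Fin (2*L)), (⟨v+L-1, hB2⟩ : Fin (2*L))),
         ((⟨u, hC⟩ : Fin (2*L)), (⟨v+L, hC2⟩ : Fin (2*L)))} := by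
      intro p hp
      simp only [Finset.mem_filter] at hp
      obtain ⟨-, hfp⟩ := hp
      simp only [Finset.mem_insert, Finset.mem_singleton, Prod.ext_iff, Fin.ext_iff]
      rcases hfp with ⟨h1, h2⟩ | ⟨h1, h2⟩ | ⟨h1, h2⟩
      · exact Or.inl ⟨h1, h2⟩
      · exact Or.inr (Or.inl ⟨h1, h2⟩)
      · exact Or.inr (Or.inr ⟨h1, h2⟩)
    calc c1 ≤ _ := Finset.card_le_card hsub
      _ ≤ 3 := by
        apply le_trans (Finset.card_insert_le _ _)
        have := Finset.card_insert_le ((⟨u+L, hA⟩ : Fin (2*L)), (⟨v+L-1, hB2⟩ : Fin (2*L)))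
          ({((⟨u, hC⟩ : Fin (2*L)), (⟨v+L, hC2⟩ : Fin (2*L)))} : Finset _)
        simp only [Finset.card_singleton] at this ⊢
        omega
  have hreg : (Finset.filter (fun x : Fin (2*L) × Fin (2*L) => rp L u v ↑x.1 ↑x.2)
      Finset.univ).card ≤ L ^ 2 := by
    have := Finset.card_le_card_of_injOn (f := fun p : Fin (2*L) × Fin (2*L) =>
        ((p.1 : ℕ) - u, (p.2 : ℕ) - v))
      (s := Finset.filter (fun x : Fin (2*L) × Fin (2*L) => rp L u v ↑x.1 ↑x.2) Finset.univ)
      (t := Finset.range L ×ˢ Finset.range L)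
      (by
        intro p hp
        simp only [Finset.mem_coe, Finset.mem_filter, Finset.mem_univ, true_and] at hp; simp only [rp] at hp
        simp only [Finset.mem_coe, Finset.mem_product, Finset.mem_range]
        omega)
      (by
        intro p hp p' hp' hEq
        simp only [Finset.mem_coe, Finset.mem_filter, Finset.mem_univ, true_and] at hp hp'; simp only [rp] at hp hp'
        simp only [Prod.ext_iff] at hEq ⊢
        constructor <;> [skip; skip] <;>
          · apply Fin.ext
            omega)
    simpa [Finset.card_range, pow_two] using this
  have hsplit1 : c1 + c2 = (Finset.filter
      (fun x : Fin (2*L) × Fin (2*L) => ¬rp L u v ↑x.1 ↑x.2) Finset.univ).card :=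
    Finset.card_filter_add_card_filter_not _
  have hsplit2 : (Finset.filter (fun x : Fin (2*L) × Fin (2*L) => rp L u v ↑x.1 ↑x.2)
        Finset.univ).card +
      (Finset.filter (fun x : Fin (2*L) × Fin (2*L) => ¬rp L u v ↑x.1 ↑x.2)
        Finset.univ).card = 4 * L ^ 2 := by
    rw [Finset.card_filter_add_card_filter_not]
    simp [Finset.card_univ]
    ring
  have hsum : 3 * L ^ 2 ≤ c1 + c2 := by omega
  have hq1 : 1 ≤ q := by omega
  calc (q - 1) ^ 4 * q ^ (3 * L ^ 2)
      ≤ (q - 1) ^ 4 * q ^ (c1 + c2) := by gcongr <;> omega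
    _ = (q - 1) ^ (c1 + (4 - c1)) * q ^ (c1 + c2) := by congr 2; omega
    _ = (q - 1) ^ c1 * q ^ c2 * ((q - 1) ^ (4 - c1) * q ^ c1) := by
        rw [pow_add, pow_add]; ring
    _ ≤ (q - 1) ^ c1 * q ^ c2 * (q ^ (4 - c1) * q ^ c1) := by gcongr <;> omega
    _ = (q - 1) ^ c1 * q ^ c2 * q ^ 4 := by
        rw [← pow_add, show 4 - c1 + c1 = 4 by omega]
lemma aux_row (q L : ℕ) (hL : 1 ≤ L) {u v u' v' : ℕ} (hu : u < L) (hv : v < L)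
    (hu' : u' < L) (hv' : v' < L) (huu : u < u')
    (W : Fin (2*L) → Fin (2*L) → Fin q)
    (h : ∀ a b, Pc q L u v a b (W a b)) (h' : ∀ a b, Pc q L u' v' a b (W a b)) : False := by
  by_cases hvv : v' ≤ v
  · exact (h ⟨u + L, by omega⟩ ⟨v, by omega⟩).2 (Or.inl ⟨rfl, rfl⟩)
      ((h' ⟨u + L, by omega⟩ ⟨v, by omega⟩).1
        (show rp L u' v' (u + L) v from ⟨by omega, by omega, by omega, by omega⟩))
  · exact (h ⟨u + L, by omega⟩ ⟨v + L - 1, by omega⟩).2 (Or.inr (Or.inl ⟨rfl, rfl⟩))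
      ((h' ⟨u + L, by omega⟩ ⟨v + L - 1, by omega⟩).1
        (show rp L u' v' (u + L) (v + L - 1) from ⟨by omega, by omega, by omega, by omega⟩))

lemma aux_col (q L : ℕ) (hL : 1 ≤ L) {u v v' : ℕ} (hu : u < L) (hv : v < L)
    (hv' : v' < L) (hvv : v < v')
    (W : Fin (2*L) → Fin (2*L) → Fin q)
    (h : ∀ a b, Pc q L u v a b (W a b)) (h' : ∀ a b, Pc q L u v' a b (W a b)) : False := by
  exact (h ⟨u, by omega⟩ ⟨v + L, by omega⟩).2 (Or.inr (Or.inr ⟨rfl, rfl⟩))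
    ((h' ⟨u, by omega⟩ ⟨v + L, by omega⟩).1
      (show rp L u v' u (v + L) from ⟨by omega, by omega, by omega, by omega⟩))

lemma D_disjoint (q L : ℕ) (hL : 1 ≤ L) {u v u' v' : ℕ} (hu : u < L) (hv : v < L)
    (hu' : u' < L) (hv' : v' < L) (hne : ¬(u = u' ∧ v = v'))
    (W : Fin (2*L) → Fin (2*L) → Fin q)
    (h : ∀ a b, Pc q L u v a b (W a b)) (h' : ∀ a b, Pc q L u' v' a b (W a b)) : False := by
  rcases lt_trichotomy u u' with huu | rfl | huu
  · exact aux_row q L hL hu hv hu' hv' huu W h h'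
  · rcases lt_trichotomy v v' with hvv | rfl | hvv
    · exact aux_col q L hL hu hv hv' hvv W h h'
    · exact hne ⟨rfl, rfl⟩
    · exact aux_col q L hL hu' hv' hv hvv W h' h
  · exact aux_row q L hL hu' hv' hu hv huu W h' h

lemma bad_count (q L : ℕ) (hq : 2 ≤ q) (hL : 1 ≤ L) :
    L ^ 2 * ((q - 1) ^ 4 * q ^ (3 * L ^ 2)) ≤
      Nat.card {W : Fin (2*L) → Fin (2*L) → Fin q //
        ∃ u v : ℕ, zeroSquareAt (2*L) L q W u v} * q ^ 4 := by
  classical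
  set D : Fin L × Fin L → Finset (Fin (2*L) → Fin (2*L) → Fin q) := fun p =>
    Finset.univ.filter (fun W => ∀ a b, Pc q L p.1 p.2 a b (W a b)) with hD
  have hdisj : ∀ p ∈ (Finset.univ : Finset (Fin L × Fin L)),
      ∀ p' ∈ (Finset.univ : Finset (Fin L × Fin L)), p ≠ p' → Disjoint (D p) (D p') := by
    intro p _ p' _ hne
    rw [Finset.disjoint_left]
    intro W hW hW'
    simp only [hD, Finset.mem_filter] at hW hW'
    refine D_disjoint q L hL p.1.isLt p.2.isLt p'.1.isLt p'.2.isLt ?_ W hW.2 hW'.2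
    rintro ⟨h1, h2⟩
    exact hne (Prod.ext (Fin.ext h1) (Fin.ext h2))
  have hsub : Finset.univ.biUnion D ⊆
      Finset.univ.filter (fun W => ∃ u v : ℕ, zeroSquareAt (2*L) L q W u v) := by
    intro W hW
    rw [Finset.mem_biUnion] at hW
    obtain ⟨p, -, hp⟩ := hW
    simp only [hD, Finset.mem_filter] at hp
    rw [Finset.mem_filter]
    refine ⟨Finset.mem_univ _, p.1, p.2, by omega, by omega, ?_⟩
    intro a b hab
    exact (hp.2 a b).1 hab
  have hbi : (Finset.univ.biUnion D).card = ∑ p : Fin L × Fin L, (D p).card :=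
    Finset.card_biUnion hdisj
  have hDcard : ∀ p : Fin L × Fin L,
      (q - 1) ^ 4 * q ^ (3 * L ^ 2) ≤ (D p).card * q ^ 4 := by
    intro p
    have := Dcard q L p.1 p.2 hq hL p.1.isLt p.2.isLt
    rwa [Nat.card_eq_fintype_card, Fintype.card_subtype] at this
  have hcardsub : Nat.card {W : Fin (2*L) → Fin (2*L) → Fin q //
      ∃ u v : ℕ, zeroSquareAt (2*L) L q W u v} =
      (Finset.univ.filter (fun W : Fin (2*L) → Fin (2*L) → Fin q =>
        ∃ u v : ℕ, zeroSquareAt (2*L) L q W u v)).card := by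
    rw [Nat.card_eq_fintype_card, Fintype.card_subtype]
  rw [hcardsub]
  calc L ^ 2 * ((q - 1) ^ 4 * q ^ (3 * L ^ 2))
      = ∑ _p : Fin L × Fin L, (q - 1) ^ 4 * q ^ (3 * L ^ 2) := by
        rw [Finset.sum_const, Finset.card_univ, smul_eq_mul, Fintype.card_prod,
          Fintype.card_fin, pow_two]
    _ ≤ ∑ p : Fin L × Fin L, (D p).card * q ^ 4 := Finset.sum_le_sum fun p _ => hDcard p
    _ = (∑ p : Fin L × Fin L, (D p).card) * q ^ 4 := by rw [Finset.sum_mul]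
    _ = (Finset.univ.biUnion D).card * q ^ 4 := by rw [hbi]
    _ ≤ _ := by
        apply Nat.mul_le_mul_right
        exact Finset.card_le_card hsub

lemma A_bound (q L : ℕ) (hq : 2 ≤ q) (hL : 1 ≤ L) :
    Nat.card {W : Fin (2*L) → Fin (2*L) → Fin q //
        ∀ u v : ℕ, ¬ zeroSquareAt (2*L) L q W u v} * q ^ 4 +
      L ^ 2 * ((q - 1) ^ 4 * q ^ (3 * L ^ 2)) ≤ q ^ (4 * L ^ 2 + 4) := by
  classical
  have h1 : Nat.card {W : Fin (2*L) → Fin (2*L) → Fin q //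
        ∀ u v : ℕ, ¬ zeroSquareAt (2*L) L q W u v} +
      Nat.card {W : Fin (2*L) → Fin (2*L) → Fin q //
        ∃ u v : ℕ, zeroSquareAt (2*L) L q W u v} = q ^ (4 * L ^ 2) := by
    rw [Nat.card_eq_fintype_card, Fintype.card_subtype,
      Nat.card_eq_fintype_card, Fintype.card_subtype]
    have hcongr : Finset.univ.filter (fun W : Fin (2*L) → Fin (2*L) → Fin q =>
        ∃ u v : ℕ, zeroSquareAt (2*L) L q W u v) =
        Finset.univ.filter (fun W : Fin (2*L) → Fin (2*L) → Fin q =>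
          ¬ ∀ u v : ℕ, ¬ zeroSquareAt (2*L) L q W u v) := by
      apply Finset.filter_congr
      intro W _
      simp [not_forall, not_not]
    rw [hcongr, Finset.card_filter_add_card_filter_not]
    rw [Finset.card_univ, Fintype.card_fun, Fintype.card_fun, Fintype.card_fin, Fintype.card_fin,
      ← pow_mul]
    congr 1
    ring
  have h2 := bad_count q L hq hL
  have h3 : (Nat.card {W : Fin (2*L) → Fin (2*L) → Fin q //
        ∀ u v : ℕ, ¬ zeroSquareAt (2*L) L q W u v} +
      Nat.card {W : Fin (2*L) → Fin (2*L) → Fin q //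
        ∃ u v : ℕ, zeroSquareAt (2*L) L q W u v}) * q ^ 4 = q ^ (4 * L ^ 2 + 4) := by
    rw [h1, ← pow_add]
  rw [add_mul] at h3
  omega
lemma main_count (q n L : ℕ) (hq : 2 ≤ q) (hL : 1 ≤ L) (hn : 2 * L ≤ n) :
    Nat.card {W : Fin n → Fin n → Fin q // ∀ u v : ℕ, ¬ zeroSquareAt n L q W u v} ≤
      (Nat.card {V : Fin (2*L) → Fin (2*L) → Fin q //
          ∀ u v : ℕ, ¬ zeroSquareAt (2*L) L q V u v}) ^ (n / (2*L) * (n / (2*L))) *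
        q ^ (n * n - (2*L * (n / (2*L))) * (2*L * (n / (2*L)))) := by
  classical
  set m := n / (2*L) with hm
  set K := 2*L*m with hK
  have hL2 : 0 < 2*L := by omega
  have hKn : K ≤ n := by
    rw [hK, hm, mul_comm]
    exact Nat.div_mul_le_self n (2*L)
  have hidx : ∀ (i : Fin m) (r : Fin (2*L)), 2*L*(i:ℕ) + (r:ℕ) < n := by
    intro i r
    have h1 : 2*L*((i:ℕ)+1) ≤ 2*L*m := Nat.mul_le_mul_left _ i.isLt
    have h2 : 2*L*(i:ℕ) + (r:ℕ) < 2*L*((i:ℕ)+1) := by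
      have := r.isLt
      nlinarith
    omega
  -- the injection
  let Φ : {W : Fin n → Fin n → Fin q // ∀ u v : ℕ, ¬ zeroSquareAt n L q W u v} →
      (Fin m → Fin m → {V : Fin (2*L) → Fin (2*L) → Fin q //
          ∀ u v : ℕ, ¬ zeroSquareAt (2*L) L q V u v}) ×
      ({p : Fin n × Fin n // ¬(((p.1 : ℕ) < K) ∧ ((p.2 : ℕ) < K))} → Fin q) :=
    fun W =>
      (fun i j => ⟨fun r c => W.1 ⟨2*L*(i:ℕ) + (r:ℕ), hidx i r⟩ ⟨2*L*(j:ℕ) + (c:ℕ), hidx j c⟩,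
        by
          rintro u v ⟨h1, h2, h3⟩
          refine W.2 (2*L*(i:ℕ) + u) (2*L*(j:ℕ) + v) ⟨?_, ?_, ?_⟩
          · have := hidx i ⟨2*L - 1, by omega⟩
            simp only [Fin.val_mk] at this
            omega
          · have := hidx j ⟨2*L - 1, by omega⟩
            simp only [Fin.val_mk] at this
            omega
          · rintro a b ⟨ha1, ha2, hb1, hb2⟩
            have hra : (a : ℕ) - 2*L*(i:ℕ) < 2*L := by omega
            have hrb : (b : ℕ) - 2*L*(j:ℕ) < 2*L := by omega
            have ha : a = ⟨2*L*(i:ℕ) + ((a : ℕ) - 2*L*(i:ℕ)), hidx i ⟨_, hra⟩⟩ :=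
              Fin.ext (by simp; omega)
            have hb : b = ⟨2*L*(j:ℕ) + ((b : ℕ) - 2*L*(j:ℕ)), hidx j ⟨_, hrb⟩⟩ :=
              Fin.ext (by simp; omega)
            rw [ha, hb]
            exact h3 ⟨_, hra⟩ ⟨_, hrb⟩ ⟨by simp; omega, by simp; omega, by simp; omega,
              by simp; omega⟩⟩,
       fun p => W.1 p.1.1 p.1.2)
  have hinj : Function.Injective Φ := by
    intro W W' h
    have h1 := congrArg Prod.fst h
    have h2 := congrArg Prod.snd h
    apply Subtype.ext
    funext a b
    by_cases hc : ((a : ℕ) < K) ∧ ((b : ℕ) < K)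
    · have hi : (a : ℕ) / (2*L) < m := by
        rw [Nat.div_lt_iff_lt_mul hL2]
        calc (a : ℕ) < K := hc.1
          _ = m * (2*L) := by rw [hK]; ring
      have hj : (b : ℕ) / (2*L) < m := by
        rw [Nat.div_lt_iff_lt_mul hL2]
        calc (b : ℕ) < K := hc.2
          _ = m * (2*L) := by rw [hK]; ring
      have hr : (a : ℕ) % (2*L) < 2*L := Nat.mod_lt _ hL2
      have hs : (b : ℕ) % (2*L) < 2*L := Nat.mod_lt _ hL2
      have := congrFun (congrFun h1 ⟨_, hi⟩) ⟨_, hj⟩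
      have hval := congrFun (congrFun (congrArg Subtype.val this) ⟨_, hr⟩) ⟨_, hs⟩
      simp only [Φ] at hval
      have ha : (⟨2*L*((a:ℕ)/(2*L)) + (a:ℕ) % (2*L), hidx ⟨_, hi⟩ ⟨_, hr⟩⟩ : Fin n) = a :=
        Fin.ext (by simp [Nat.div_add_mod])
      have hb : (⟨2*L*((b:ℕ)/(2*L)) + (b:ℕ) % (2*L), hidx ⟨_, hj⟩ ⟨_, hs⟩⟩ : Fin n) = b :=
        Fin.ext (by simp [Nat.div_add_mod])
      rwa [ha, hb] at hval
    · exact congrFun h2 ⟨(a, b), hc⟩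
  have hcard := Nat.card_le_card_of_injective Φ hinj
  rw [Nat.card_prod, Nat.card_fun, Nat.card_fun, Nat.card_fun] at hcard
  rw [Nat.card_eq_fintype_card (α := Fin m), Fintype.card_fin, ← pow_mul] at hcard
  have hS : Nat.card {p : Fin n × Fin n // ¬(((p.1 : ℕ) < K) ∧ ((p.2 : ℕ) < K))} =
      n * n - K * K := by
    rw [Nat.card_eq_fintype_card, Fintype.card_subtype_compl]
    have e1 : {p : Fin n × Fin n // ((p.1 : ℕ) < K) ∧ ((p.2 : ℕ) < K)} ≃ Fin K × Fin K := by
      refine Equiv.trans (Equiv.subtypeProdEquivProd (p := fun a : Fin n => (a:ℕ) < K) (q := fun b : Fin n => (b:ℕ) < K)) (Equiv.prodCongr ?_ ?_) <;>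
      · exact {
          toFun := fun a => ⟨a.1.1, a.2⟩
          invFun := fun b => ⟨⟨b.1, lt_of_lt_of_le b.2 hKn⟩, b.2⟩
          left_inv := fun a => by ext; simp
          right_inv := fun b => by ext; simp }
    rw [Fintype.card_congr e1]
    simp [Fintype.card_prod]
  rw [hS, Nat.card_eq_fintype_card (α := Fin q), Fintype.card_fin] at hcard
  exact hcard

lemma good_nonempty (q N L : ℕ) (hq : 2 ≤ q) (hL : 1 ≤ L) :
    Nonempty {W : Fin N → Fin N → Fin q // ∀ u v : ℕ, ¬ zeroSquareAt N L q W u v} := by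
  refine ⟨⟨fun _ _ => ⟨1, by omega⟩, ?_⟩⟩
  rintro u v ⟨h1, h2, h3⟩
  have := h3 ⟨u, by omega⟩ ⟨v, by omega⟩ ⟨le_refl _, by simp; omega, le_refl _, by simp; omega⟩
  simp at this

set_option maxHeartbeats 1000000 in
theorem stmt16 (q : ℕ) (hq : 2 ≤ q) :
    ∃ C₂ : ℝ, 0 < C₂ ∧ C₂ = Real.logb q (Real.exp 1) * ((q : ℝ) - 1) ^ 4 / (4 * (q : ℝ) ^ 4) ∧
      ∀ n L : ℕ, 1 ≤ L → 2 * L ≤ n →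
        C₂ * ((n : ℝ) - 2 * (L : ℝ)) ^ 2 / (q : ℝ) ^ (L ^ 2) ≤
          (n : ℝ) ^ 2 -
            Real.logb q
              (Nat.card {W : Fin n → Fin n → Fin q //
                ∀ u v : ℕ, ¬ zeroSquareAt n L q W u v}) := by
  set b : ℝ := (q : ℝ) with hb
  have hb1 : (1:ℝ) < b := by rw [hb]; exact_mod_cast hq.trans_lt' one_lt_two
  have hb0 : (0:ℝ) < b := lt_trans one_pos hb1
  have hlogb : 0 < Real.log b := Real.log_pos hb1
  have hlogbe : Real.logb q (Real.exp 1) = 1 / Real.log b := by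
    rw [Real.logb, Real.log_exp]
  have hbm1 : (0:ℝ) < b - 1 := by linarith
  refine ⟨Real.logb q (Real.exp 1) * ((q : ℝ) - 1) ^ 4 / (4 * (q : ℝ) ^ 4), ?_, rfl, ?_⟩
  · rw [hlogbe]
    positivity
  intro n L hL hn
  -- abbreviations
  set m := n / (2*L) with hm
  set K := 2*L*m with hK
  set A := Nat.card {V : Fin (2*L) → Fin (2*L) → Fin q //
      ∀ u v : ℕ, ¬ zeroSquareAt (2*L) L q V u v} with hA
  set Cn := Nat.card {W : Fin n → Fin n → Fin q //
      ∀ u v : ℕ, ¬ zeroSquareAt n L q W u v} with hCn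
  have hA1 : 1 ≤ A := by
    haveI := good_nonempty q (2*L) L hq hL
    exact Nat.card_pos
  have hCn1 : 1 ≤ Cn := by
    haveI := good_nonempty q n L hq hL
    exact Nat.card_pos
  have hKn : K ≤ n := by
    rw [hK, hm, mul_comm]
    exact Nat.div_mul_le_self n (2*L)
  -- p = b^(L²)
  set p : ℝ := b ^ (L^2) with hp
  have hp0 : (0:ℝ) < p := pow_pos hb0 _
  set x : ℝ := (L:ℝ)^2 * (b-1)^4 / (p * b^4) with hx
  have hx0 : 0 ≤ x := by positivity
  -- A ≤ p^4 (1 - x)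
  have hreal : (A:ℝ) * b^4 + (L:ℝ)^2 * ((b-1)^4 * b^(3*L^2)) ≤ b^(4*L^2+4) := by
    have h := A_bound q L hq hL
    have h2 := (Nat.cast_le (α := ℝ)).mpr h
    push_cast [Nat.cast_sub (show 1 ≤ q by omega)] at h2
    convert h2 using 2
  have hpow3 : b^(3*L^2) = p^3 := by rw [hp, ← pow_mul]; congr 1; ring
  have hpow4 : b^(4*L^2+4) = p^4 * b^4 := by rw [hp, ← pow_mul, ← pow_add]; congr 1; ring
  have hA_le : (A:ℝ) ≤ p^4 * (1 - x) := by
    rw [hx]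
    rw [show p^4 * (1 - (L:ℝ)^2 * (b-1)^4 / (p * b^4)) =
        (p^4 * b^4 - (L:ℝ)^2 * ((b-1)^4 * p^3)) / b^4 by field_simp]
    rw [le_div_iff₀ (by positivity)]
    rw [hpow3, hpow4] at hreal
    linarith
  have h1x : 0 < 1 - x := by
    have hA0 : (1:ℝ) ≤ (A:ℝ) := by exact_mod_cast hA1
    by_contra hcon
    push_neg at hcon
    have : p^4 * (1-x) ≤ 0 := mul_nonpos_of_nonneg_of_nonpos (by positivity) hcon
    linarith
  -- Cn ≤ A^(m²) q^(n²-K²)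
  have hcount := main_count q n L hq hL hn
  rw [← hm, ← hK, ← hA, ← hCn] at hcount
  have hcount' : (Cn:ℝ) ≤ (A:ℝ)^(m*m) * b^(n*n - K*K) := by
    have := (Nat.cast_le (α := ℝ)).mpr hcount
    push_cast at this
    exact this
  have hCn0 : (0:ℝ) < (Cn:ℝ) := by exact_mod_cast hCn1
  have hA0 : (0:ℝ) < (A:ℝ) := by exact_mod_cast hA1
  have hlogCn : Real.log Cn ≤ (m:ℝ)*(m:ℝ) * Real.log A +
      ((n:ℝ)*(n:ℝ) - (K:ℝ)*(K:ℝ)) * Real.log b := by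
    calc Real.log Cn ≤ Real.log ((A:ℝ)^(m*m) * b^(n*n - K*K)) :=
          Real.log_le_log hCn0 hcount'
      _ = (m:ℝ)*(m:ℝ) * Real.log A + ((n:ℝ)*(n:ℝ) - (K:ℝ)*(K:ℝ)) * Real.log b := by
          rw [Real.log_mul (by positivity) (by positivity), Real.log_pow, Real.log_pow]
          have hcast : ((n*n - K*K : ℕ) : ℝ) = (n:ℝ)*(n:ℝ) - (K:ℝ)*(K:ℝ) := by
            rw [Nat.cast_sub (Nat.mul_le_mul hKn hKn)]
            push_cast
            ring
          rw [hcast]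
          push_cast
          ring
  have hlogA : Real.log A ≤ 4*(L:ℝ)^2 * Real.log b + Real.log (1-x) := by
    calc Real.log A ≤ Real.log (p^4 * (1-x)) := Real.log_le_log hA0 hA_le
      _ = 4*(L:ℝ)^2 * Real.log b + Real.log (1-x) := by
          rw [Real.log_mul (by positivity) (ne_of_gt h1x), Real.log_pow, hp, Real.log_pow]
          push_cast
          ring
  have hlog1x : Real.log (1-x) ≤ -x := by
    have := Real.log_le_sub_one_of_pos h1x
    linarith
  have hKr : (K:ℝ) = 2*(L:ℝ)*(m:ℝ) := by rw [hK]; push_cast; ring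
  have hmain : Real.log Cn ≤ (n:ℝ)*(n:ℝ) * Real.log b - (m:ℝ)^2 * x := by
    calc Real.log Cn ≤ (m:ℝ)*(m:ℝ) * Real.log A +
        ((n:ℝ)*(n:ℝ) - (K:ℝ)*(K:ℝ)) * Real.log b := hlogCn
      _ ≤ (m:ℝ)*(m:ℝ) * (4*(L:ℝ)^2 * Real.log b + Real.log (1-x)) +
          ((n:ℝ)*(n:ℝ) - (K:ℝ)*(K:ℝ)) * Real.log b := by
          have hm0 : (0:ℝ) ≤ (m:ℝ)*(m:ℝ) := by positivity
          have hmul := mul_le_mul_of_nonneg_left hlogA hm0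
          linarith
      _ ≤ (m:ℝ)*(m:ℝ) * (4*(L:ℝ)^2 * Real.log b + (-x)) +
          ((n:ℝ)*(n:ℝ) - (K:ℝ)*(K:ℝ)) * Real.log b := by
          have hm0 : (0:ℝ) ≤ (m:ℝ)*(m:ℝ) := by positivity
          have hmul := mul_le_mul_of_nonneg_left hlog1x hm0
          linarith
      _ = (n:ℝ)*(n:ℝ) * Real.log b - (m:ℝ)^2 * x := by
          rw [hKr]
          ring
  have hstep1 : Real.logb q Cn ≤ (n:ℝ)^2 - (m:ℝ)^2 * x / Real.log b := by
    rw [Real.logb]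
    rw [div_le_iff₀ hlogb]
    calc Real.log Cn ≤ (n:ℝ)*(n:ℝ) * Real.log b - (m:ℝ)^2 * x := hmain
      _ = ((n:ℝ)^2 - (m:ℝ)^2 * x / Real.log b) * Real.log b := by
          rw [sub_mul, div_mul_cancel₀ _ (ne_of_gt hlogb)]
          ring
  -- the combinatorial size comparison
  have hnK : (n:ℝ) - 2*(L:ℝ) ≤ (K:ℝ) := by
    have h1 : 2*L*m + n % (2*L) = n := Nat.div_add_mod n (2*L)
    have h2 : n % (2*L) < 2*L := Nat.mod_lt _ (by omega)
    have : (n:ℕ) ≤ K + 2*L := by omega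
    have := (Nat.cast_le (α := ℝ)).mpr this
    push_cast at this
    linarith
  have hnK0 : (0:ℝ) ≤ (n:ℝ) - 2*(L:ℝ) := by
    have := (Nat.cast_le (α := ℝ)).mpr hn
    push_cast at this
    linarith
  have hsq : ((n:ℝ) - 2*(L:ℝ))^2 ≤ 4*(L:ℝ)^2*(m:ℝ)^2 := by
    have := pow_le_pow_left₀ hnK0 hnK 2
    rw [hKr] at this
    nlinarith
  have hstep2 : Real.logb q (Real.exp 1) * ((q : ℝ) - 1) ^ 4 / (4 * (q : ℝ) ^ 4) *
      ((n : ℝ) - 2 * (L : ℝ)) ^ 2 / (q : ℝ) ^ (L ^ 2) ≤ (m:ℝ)^2 * x / Real.log b := by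
    rw [hlogbe, ← hb, ← hp, hx]
    rw [show 1 / Real.log b * (b - 1) ^ 4 / (4 * b ^ 4) * ((n:ℝ) - 2 * (L:ℝ)) ^ 2 / p =
        (((n:ℝ) - 2*(L:ℝ))^2 / 4) * ((b-1)^4 / (p * b^4 * Real.log b)) by
          field_simp]
    rw [show (m:ℝ)^2 * ((L:ℝ)^2 * (b-1)^4 / (p * b^4)) / Real.log b =
        ((L:ℝ)^2 * (m:ℝ)^2) * ((b-1)^4 / (p * b^4 * Real.log b)) by
          field_simp]
    apply mul_le_mul_of_nonneg_right _ (by positivity)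
    linarith
  linarith
end
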